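/- arXiv:2207.01225 — 7 statements merged into one kernel-verified Lean document; each statement's English description precedes it below -/
import Mathlib

section
/- Let (S, ⋆) be a finite fusion rule and let n, m be positive integers. Then there exists a commutative nonassociative F-algebra U equipped with m (S,⋆)-decompositions (U_s^j)_{s∈S} (j = 1,…,m) and elements u₁,…,u_n, such that U is the smallest subalgebra of U containing u₁,…,u_n and invariant under every projection pr_s^j, and with the following universal property: for every commutative nonassociative F-algebra N equipped with m (S,⋆)-decompositions (N_s^j)_{s∈S} (j = 1,…,m) and elements y₁,…,y_n such that N is the smallest subalgebra of N containing y₁,…,y_n and invariant under all its projections, there exists a unique F-algebra homomorphism φ : U → N with φ(u_i) = y_i for all i = 1,…,n and φ(U_s^j) ⊆ N_s^j for all s ∈ S and j = 1,…,m; moreover this φ is surjective. -/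
/-- A commutative nonassociative algebra over the field `F`, bundled with its structure. -/
structure CommNAAlg (F : Type) [Field F] where
  carrier : Type
  [ring : NonUnitalNonAssocCommRing carrier]
  [mod : Module F carrier]
  [scc : SMulCommClass F carrier carrier]
  [ist : IsScalarTower F carrier carrier]

attribute [instance] CommNAAlg.ring CommNAAlg.mod CommNAAlg.scc CommNAAlg.ist

/-- An `(S,⋆)`-decomposition of `M`: a direct sum decomposition `M = ⊕_{s ∈ S} M_s`
(recorded together with its projections `pr_s`) satisfying the fusion rule `⋆`. -/
structure Decomposition (F : Type) [Field F] (M : Type) [NonUnitalNonAssocCommRing M]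
    [Module F M] (S : Type) [Fintype S] (star : S → S → Set S) where
  comp : S → Submodule F M
  proj : S → M →ₗ[F] M
  proj_mem : ∀ s x, proj s x ∈ comp s
  proj_eq_self : ∀ s, ∀ x ∈ comp s, proj s x = x
  proj_eq_zero : ∀ s t, s ≠ t → ∀ x ∈ comp t, proj s x = 0
  sum_proj : ∀ x, ∑ s, proj s x = x
  fusion : ∀ s t, ∀ x ∈ comp s, ∀ y ∈ comp t, x * y ∈ ⨆ u ∈ star s t, comp u

/-- `M` is generated by `X` as a decomposition algebra (w.r.t. the family of
decompositions `D`): the smallest subalgebra containing `X` and invariant under all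
the projections of all the decompositions is `M` itself. -/
def GensDecompAlg {F : Type} [Field F] {M : Type} [NonUnitalNonAssocCommRing M]
    [Module F M] {S : Type} [Fintype S] {star : S → S → Set S} {J : Type}
    (D : J → Decomposition F M S star) (X : Set M) : Prop :=
  ∀ A : NonUnitalSubalgebra F M, X ⊆ ↑A →
    (∀ j s, ∀ x ∈ A, (D j).proj s x ∈ A) → ∀ x : M, x ∈ A


/-! The universal algebra is the free nonassociative algebra on formal terms, built from the
generators by products and projection symbols `pr_s^j`, modulo every linear relation that holds
under all evaluations in all decomposition algebras. The axioms of a decomposition and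
commutativity are such relations, so the quotient carries `m` decompositions, and evaluation
descends to it. A homomorphism mapping components into components commutes with the
projections, so equalizers and images of such homomorphisms are closed under them; generation
then gives uniqueness and surjectivity. -/

namespace Decomposition

variable {F : Type} [Field F] {M : Type} [NonUnitalNonAssocCommRing M] [Module F M]
  {S : Type} [Fintype S] {star : S → S → Set S}

lemma proj_eq_zero_of_mem_iSup (E : Decomposition F M S star) {A : Set S} {u : S} (hu : u ∉ A)
    {x : M} (hx : x ∈ ⨆ v ∈ A, E.comp v) : E.proj u x = 0 := by
  rw [iSup_subtype'] at hx
  induction hx using Submodule.iSup_induction' with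
  | mem v w hw => exact E.proj_eq_zero u v (fun h => hu (h ▸ v.2)) w hw
  | zero => exact map_zero _
  | add a b _ _ ha hb => rw [map_add, ha, hb, add_zero]

lemma proj_mul_proj_eq_zero (E : Decomposition F M S star) {s t u : S} (hu : u ∉ star s t)
    (x y : M) : E.proj u (E.proj s x * E.proj t y) = 0 :=
  E.proj_eq_zero_of_mem_iSup hu (E.fusion s t _ (E.proj_mem s x) _ (E.proj_mem t y))

def ofProj (P : S → M →ₗ[F] M) (idem : ∀ s x, P s (P s x) = P s x)
    (ortho : ∀ s t, s ≠ t → ∀ x, P s (P t x) = 0) (sum : ∀ x, ∑ s, P s x = x)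
    (fusion : ∀ s t u, u ∉ star s t → ∀ x y, P u (P s x * P t y) = 0) :
    Decomposition F M S star where
  comp s := LinearMap.range (P s)
  proj := P
  proj_mem s x := LinearMap.mem_range_self _ x
  proj_eq_self := by
    rintro s _ ⟨x, rfl⟩
    exact idem s x
  proj_eq_zero := by
    rintro s t hst _ ⟨x, rfl⟩
    exact ortho s t hst x
  sum_proj := sum
  fusion := by
    rintro s t _ ⟨x, rfl⟩ _ ⟨y, rfl⟩
    rw [← sum (P s x * P t y)]
    refine Submodule.sum_mem _ fun u _ => ?_
    by_cases hu : u ∈ star s t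
    · exact Submodule.mem_iSup_of_mem u (Submodule.mem_iSup_of_mem hu
        (LinearMap.mem_range_self _ _))
    · rw [fusion s t u hu]
      exact zero_mem _

variable {N : Type} [NonUnitalNonAssocCommRing N] [Module F N]

lemma map_proj {G : Type} [FunLike G M N] [LinearMapClass G F M N] {D : Decomposition F M S star}
    {E : Decomposition F N S star} (f : G)
    (hf : ∀ s, ∀ x ∈ D.comp s, f x ∈ E.comp s) (s : S) (x : M) :
    f (D.proj s x) = E.proj s (f x) := by
  conv_rhs => rw [← D.sum_proj x, map_sum, map_sum]
  rw [Finset.sum_eq_single_of_mem s (Finset.mem_univ s)]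
  · exact (E.proj_eq_self s _ (hf s _ (D.proj_mem s x))).symm
  · intro t _ hts
    exact E.proj_eq_zero s t (Ne.symm hts) _ (hf t _ (D.proj_mem t x))

end Decomposition

namespace GensDecompAlg

variable {F : Type} [Field F] {M : Type} [NonUnitalNonAssocCommRing M] [Module F M]
  {N : Type} [NonUnitalNonAssocCommRing N] [Module F N]
  {S : Type} [Fintype S] {star : S → S → Set S} {J : Type}

lemma nonUnitalAlgHom_ext {D : J → Decomposition F M S star} {E : J → Decomposition F N S star}
    {X : Set M} (hX : GensDecompAlg D X) {φ ψ : M →ₙₐ[F] N} (h : Set.EqOn φ ψ X)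
    (hφ : ∀ j s, ∀ x ∈ (D j).comp s, φ x ∈ (E j).comp s)
    (hψ : ∀ j s, ∀ x ∈ (D j).comp s, ψ x ∈ (E j).comp s) : φ = ψ := by
  ext x
  refine hX (NonUnitalAlgHom.equalizer φ ψ) h (fun j s z hz => ?_) x
  change φ _ = ψ _
  rw [Decomposition.map_proj φ (hφ j), Decomposition.map_proj ψ (hψ j),
    show φ z = ψ z from hz]

lemma surjective {E : J → Decomposition F N S star} {Y : Set N} (hY : GensDecompAlg E Y)
    {D : J → Decomposition F M S star} (φ : M →ₙₐ[F] N) (hYφ : Y ⊆ Set.range φ)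
    (hφ : ∀ j s, ∀ x ∈ (D j).comp s, φ x ∈ (E j).comp s) : Function.Surjective φ := by
  intro y
  refine hY (NonUnitalAlgHom.range φ) hYφ ?_ y
  rintro j s _ ⟨x, rfl⟩
  exact ⟨(D j).proj s x, Decomposition.map_proj φ (hφ j) s x⟩

end GensDecompAlg

namespace UniversalDecompAlg

inductive Term (S : Type) (n m : ℕ) : Type
  | gen : Fin n → Term S n m
  | mul : Term S n m → Term S n m → Term S n m
  | pr : Fin m → S → Term S n m → Term S n m

variable {F : Type} [Field F] {S : Type} {star : S → S → Set S} {n m : ℕ}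

instance : Mul (Term S n m) := ⟨Term.mul⟩

def Term.eval {M : Type*} [Mul M] (x : Fin n → M) (p : Fin m → S → M → M) : Term S n m → M
  | .gen i => x i
  | .mul a b => a.eval x p * b.eval x p
  | .pr j s a => p j s (a.eval x p)

@[simps]
def Term.evalMulHom {M : Type*} [Mul M] (x : Fin n → M) (p : Fin m → S → M → M) :
    Term S n m →ₙ* M where
  toFun := Term.eval x p
  map_mul' _ _ := rfl

abbrev FreeAlg (F S : Type) [Field F] (n m : ℕ) : Type := MonoidAlgebra F (Term S n m)

namespace FreeAlg

noncomputable def pr (j : Fin m) (s : S) : FreeAlg F S n m →ₗ[F] FreeAlg F S n m :=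
  MonoidAlgebra.mapDomainLinearMap F F (Term.pr j s)

lemma pr_single (j : Fin m) (s : S) (t : Term S n m) (c : F) :
    pr j s (MonoidAlgebra.single t c) = MonoidAlgebra.single (Term.pr j s t) c :=
  MonoidAlgebra.mapDomainLinearMap_single _ _ _

variable [Fintype S] {M : Type} [NonUnitalNonAssocCommRing M] [Module F M] [SMulCommClass F M M]
  [IsScalarTower F M M]

noncomputable def eval (E : Fin m → Decomposition F M S star) (y : Fin n → M) :
    FreeAlg F S n m →ₙₐ[F] M :=
  MonoidAlgebra.liftMagma F (Term.evalMulHom y fun j s => (E j).proj s)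

lemma eval_single (E : Fin m → Decomposition F M S star) (y : Fin n → M) (t : Term S n m)
    (c : F) : eval E y (MonoidAlgebra.single t c) = c • t.eval y (fun j s => (E j).proj s) := by
  simp [eval]

lemma eval_pr (E : Fin m → Decomposition F M S star) (y : Fin n → M) (j : Fin m) (s : S)
    (a : FreeAlg F S n m) : eval E y (pr j s a) = (E j).proj s (eval E y a) := by
  induction a using MonoidAlgebra.induction_linear with
  | zero => simp
  | add a b ha hb => simp only [map_add, ha, hb]
  | single t c => simp [pr_single, eval_single, Term.eval]

end FreeAlg

variable [Fintype S]

-- The index runs over all algebras in `Type`, but the infimum is a submodule of a space in `Type`,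
-- so the quotient stays in `Type` (a product over all such algebras would not).
variable (F S star n m) in
noncomputable def relations : Submodule F (FreeAlg F S n m) :=
  ⨅ (N : CommNAAlg F) (E : Fin m → Decomposition F N.carrier S star) (y : Fin n → N.carrier),
    LinearMap.ker (FreeAlg.eval E y : FreeAlg F S n m →ₗ[F] N.carrier)

lemma mem_relations_iff {a : FreeAlg F S n m} :
    a ∈ relations F S star n m ↔ ∀ (N : CommNAAlg F)
      (E : Fin m → Decomposition F N.carrier S star) (y : Fin n → N.carrier),
      FreeAlg.eval E y a = 0 := by
  simp [relations]

lemma mul_mem_relations_left (a : FreeAlg F S n m) {b : FreeAlg F S n m}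
    (hb : b ∈ relations F S star n m) : a * b ∈ relations F S star n m := by
  rw [mem_relations_iff] at hb ⊢
  intro N E y
  rw [map_mul, hb, mul_zero]

lemma mul_mem_relations_right {a : FreeAlg F S n m} (ha : a ∈ relations F S star n m)
    (b : FreeAlg F S n m) : a * b ∈ relations F S star n m := by
  rw [mem_relations_iff] at ha ⊢
  intro N E y
  rw [map_mul, ha, zero_mul]

variable (F S star n m) in
def Alg : Type := FreeAlg F S n m ⧸ relations F S star n m

noncomputable instance : AddCommGroup (Alg F S star n m) :=
  inferInstanceAs (AddCommGroup (FreeAlg F S n m ⧸ relations F S star n m))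

noncomputable instance : Module F (Alg F S star n m) :=
  inferInstanceAs (Module F (FreeAlg F S n m ⧸ relations F S star n m))

variable (F S star n m) in
noncomputable def mk : FreeAlg F S n m →ₗ[F] Alg F S star n m := (relations F S star n m).mkQ

lemma mk_surjective : Function.Surjective (mk F S star n m) := Submodule.mkQ_surjective _

noncomputable def mulBilin :
    Alg F S star n m →ₗ[F] Alg F S star n m →ₗ[F] Alg F S star n m :=
  ((LinearMap.mul F (FreeAlg F S n m)).compr₂ (mk F S star n m)).liftQ₂ _ _
    (fun _ ha => LinearMap.ext fun b => (Submodule.Quotient.mk_eq_zero _).mpr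
      (mul_mem_relations_right ha b))
    (fun _ hb => LinearMap.ext fun a => (Submodule.Quotient.mk_eq_zero _).mpr
      (mul_mem_relations_left a hb))

noncomputable instance : Mul (Alg F S star n m) := ⟨fun x y => mulBilin x y⟩

lemma mk_mul (a b : FreeAlg F S n m) :
    mk F S star n m (a * b) = mk F S star n m a * mk F S star n m b := rfl

lemma mk_eq_mk_iff {a b : FreeAlg F S n m} : mk F S star n m a = mk F S star n m b ↔
    ∀ (N : CommNAAlg F) (E : Fin m → Decomposition F N.carrier S star)
      (y : Fin n → N.carrier), FreeAlg.eval E y a = FreeAlg.eval E y b := by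
  change (Submodule.Quotient.mk a : FreeAlg F S n m ⧸ relations F S star n m) =
    Submodule.Quotient.mk b ↔ _
  simp only [Submodule.Quotient.eq, mem_relations_iff, map_sub, sub_eq_zero]

noncomputable instance : NonUnitalNonAssocCommRing (Alg F S star n m) where
  left_distrib x := map_add (mulBilin x)
  right_distrib := LinearMap.map_add₂ mulBilin
  zero_mul := LinearMap.map_zero₂ mulBilin
  mul_zero x := map_zero (mulBilin x)
  mul_comm x y := by
    obtain ⟨a, rfl⟩ := mk_surjective x
    obtain ⟨b, rfl⟩ := mk_surjective y
    rw [← mk_mul, ← mk_mul, mk_eq_mk_iff]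
    intro N E z
    rw [map_mul, map_mul, mul_comm]

instance : SMulCommClass F (Alg F S star n m) (Alg F S star n m) where
  smul_comm c x y := (map_smul (mulBilin x) c y).symm

instance : IsScalarTower F (Alg F S star n m) (Alg F S star n m) where
  smul_assoc c x y := LinearMap.map_smul₂ mulBilin c x y

variable {N : Type} [NonUnitalNonAssocCommRing N] [Module F N] [SMulCommClass F N N]
  [IsScalarTower F N N]

noncomputable def lift (E : Fin m → Decomposition F N S star) (y : Fin n → N) :
    Alg F S star n m →ₙₐ[F] N :=
  { (relations F S star n m).liftQ (FreeAlg.eval E y : FreeAlg F S n m →ₗ[F] N) fun _ ha =>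
      LinearMap.mem_ker.mpr (mem_relations_iff.mp ha ⟨N⟩ E y) with
    map_zero' := map_zero _
    map_mul' x x' := by
      obtain ⟨a, rfl⟩ := mk_surjective x
      obtain ⟨b, rfl⟩ := mk_surjective x'
      exact map_mul (FreeAlg.eval E y) a b }

lemma lift_mk (E : Fin m → Decomposition F N S star) (y : Fin n → N) (a : FreeAlg F S n m) :
    lift E y (mk F S star n m a) = FreeAlg.eval E y a := rfl

lemma eq_of_forall_lift_eq {x x' : Alg F S star n m}
    (h : ∀ (N : CommNAAlg F) (E : Fin m → Decomposition F N.carrier S star)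
      (y : Fin n → N.carrier), lift E y x = lift E y x') : x = x' := by
  obtain ⟨a, rfl⟩ := mk_surjective x
  obtain ⟨b, rfl⟩ := mk_surjective x'
  exact mk_eq_mk_iff.mpr h

noncomputable def proj (j : Fin m) (s : S) : Alg F S star n m →ₗ[F] Alg F S star n m :=
  (relations F S star n m).mapQ (relations F S star n m) (FreeAlg.pr j s) fun a ha => by
    rw [Submodule.mem_comap, mem_relations_iff]
    intro N E y
    rw [FreeAlg.eval_pr, mem_relations_iff.mp ha N E y, map_zero]

lemma lift_proj (E : Fin m → Decomposition F N S star) (y : Fin n → N) (j : Fin m) (s : S)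
    (x : Alg F S star n m) : lift E y (proj j s x) = (E j).proj s (lift E y x) := by
  obtain ⟨a, rfl⟩ := mk_surjective x
  exact FreeAlg.eval_pr E y j s a

variable (F S star n m) in
noncomputable def decomposition (j : Fin m) : Decomposition F (Alg F S star n m) S star :=
  Decomposition.ofProj (proj j)
    (fun s x => eq_of_forall_lift_eq fun N E y => by
      simp only [lift_proj, (E j).proj_eq_self s _ ((E j).proj_mem s _)])
    (fun s t hst x => eq_of_forall_lift_eq fun N E y => by
      simp only [lift_proj, map_zero, (E j).proj_eq_zero s t hst _ ((E j).proj_mem t _)])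
    (fun x => eq_of_forall_lift_eq fun N E y => by
      simp only [map_sum, lift_proj, (E j).sum_proj])
    (fun s t u hu x x' => eq_of_forall_lift_eq fun N E y => by
      simp only [lift_proj, map_mul, map_zero, (E j).proj_mul_proj_eq_zero hu])

variable (F S star n m) in
noncomputable def gen (i : Fin n) : Alg F S star n m :=
  mk F S star n m (MonoidAlgebra.single (Term.gen i) 1)

lemma gensDecompAlg :
    GensDecompAlg (decomposition F S star n m) (Set.range (gen F S star n m)) := by
  intro A hgen hproj x
  have hterm : ∀ t : Term S n m, mk F S star n m (MonoidAlgebra.single t 1) ∈ A := by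
    intro t
    induction t with
    | gen i => exact hgen ⟨i, rfl⟩
    | mul t₁ t₂ ih₁ ih₂ =>
      rw [show Term.mul t₁ t₂ = t₁ * t₂ from rfl, ← one_mul (1 : F),
        ← MonoidAlgebra.single_mul_single, mk_mul]
      exact mul_mem ih₁ ih₂
    | pr j s t ih =>
      rw [← FreeAlg.pr_single]
      exact hproj j s _ ih
  obtain ⟨a, rfl⟩ := mk_surjective x
  induction a using MonoidAlgebra.induction_linear with
  | zero => rw [map_zero]; exact zero_mem A
  | add a b ha hb => rw [map_add]; exact add_mem ha hb
  | single t c =>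
    rw [← mul_one c, ← MonoidAlgebra.smul_single', map_smul]
    exact SMulMemClass.smul_mem c (hterm t)

lemma lift_gen (E : Fin m → Decomposition F N S star) (y : Fin n → N) (i : Fin n) :
    lift E y (gen F S star n m i) = y i := by
  simp [gen, lift_mk, FreeAlg.eval_single, Term.eval]

lemma lift_mem_comp (E : Fin m → Decomposition F N S star) (y : Fin n → N) (j : Fin m) (s : S) :
    ∀ x ∈ (decomposition F S star n m j).comp s, lift E y x ∈ (E j).comp s := by
  rintro _ ⟨x, rfl⟩
  exact lift_proj E y j s x ▸ (E j).proj_mem s _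

end UniversalDecompAlg

theorem universal_decomposition_algebra_general (F : Type) [Field F]
    (S : Type) [Fintype S] (star : S → S → Set S) (n m : ℕ) :
    ∃ (U : CommNAAlg F) (D : Fin m → Decomposition F U.carrier S star)
      (u : Fin n → U.carrier),
      GensDecompAlg D (Set.range u) ∧
      ∀ (N : CommNAAlg F) (E : Fin m → Decomposition F N.carrier S star)
        (y : Fin n → N.carrier), GensDecompAlg E (Set.range y) →
        (∃! φ : U.carrier →ₙₐ[F] N.carrier,
            (∀ i, φ (u i) = y i) ∧
            ∀ j s, ∀ x ∈ (D j).comp s, φ x ∈ (E j).comp s) ∧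
        ∀ φ : U.carrier →ₙₐ[F] N.carrier,
          ((∀ i, φ (u i) = y i) ∧
            ∀ j s, ∀ x ∈ (D j).comp s, φ x ∈ (E j).comp s) →
          Function.Surjective φ := by
  open UniversalDecompAlg in
  refine ⟨⟨Alg F S star n m⟩, decomposition F S star n m, gen F S star n m, gensDecompAlg,
    fun N E y hy => ⟨⟨lift E y, ⟨lift_gen E y, lift_mem_comp E y⟩, fun ψ hψ => ?_⟩,
      fun φ hφ => ?_⟩⟩
  · refine gensDecompAlg.nonUnitalAlgHom_ext ?_ hψ.2 (lift_mem_comp E y)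
    rintro _ ⟨i, rfl⟩
    exact (hψ.1 i).trans (lift_gen E y i).symm
  · refine hy.surjective φ ?_ hφ.2
    rintro _ ⟨i, rfl⟩
    exact ⟨gen F S star n m i, hφ.1 i⟩

/-- Theorem 1: the category of `n`-generated `(S,⋆)`-decomposition algebras over `F`
equipped with `m` decompositions has a universal object. -/
theorem universal_decomposition_algebra (F : Type) [Field F] (hchar : ringChar F ≠ 2)
    (S : Type) [Fintype S] (star : S → S → Set S) (n m : ℕ) (hn : 0 < n) (hm : 0 < m) :
    ∃ (U : CommNAAlg F) (D : Fin m → Decomposition F U.carrier S star)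
      (u : Fin n → U.carrier),
      GensDecompAlg D (Set.range u) ∧
      ∀ (N : CommNAAlg F) (E : Fin m → Decomposition F N.carrier S star)
        (y : Fin n → N.carrier), GensDecompAlg E (Set.range y) →
        (∃! φ : U.carrier →ₙₐ[F] N.carrier,
            (∀ i, φ (u i) = y i) ∧
            ∀ j s, ∀ x ∈ (D j).comp s, φ x ∈ (E j).comp s) ∧
        ∀ φ : U.carrier →ₙₐ[F] N.carrier,
          ((∀ i, φ (u i) = y i) ∧
            ∀ j s, ∀ x ∈ (D j).comp s, φ x ∈ (E j).comp s) →
          Function.Surjective φ :=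
  universal_decomposition_algebra_general F S star n m
end

section
/- Let S ⊆ F be a finite set, ⋆ : S × S → 2^S a fusion rule on S, and n a positive integer. Then there exists a commutative nonassociative F-algebra U with elements u₁,…,u_n, each an (S,⋆)-axis of U, which generate U as an F-algebra, with the following universal property: for every commutative nonassociative F-algebra N with elements b₁,…,b_n, each an (S,⋆)-axis of N, generating N as an F-algebra, there exists a unique F-algebra homomorphism φ : U → N with φ(u_i) = b_i for all i = 1,…,n; moreover this φ is surjective. -/
/-- The `s`-eigenspace of left multiplication by `a`. -/
def eigSp {F M : Type} [Field F] [NonUnitalNonAssocCommRing M] [Module F M]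
    [SMulCommClass F M M] [IsScalarTower F M M] (a : M) (s : F) : Submodule F M where
  carrier := {x | a * x = s • x}
  add_mem' := by
    intro x y hx hy
    simp only [Set.mem_setOf_eq] at *
    rw [mul_add, hx, hy, smul_add]
  zero_mem' := by simp
  smul_mem' := by
    intro c x hx
    simp only [Set.mem_setOf_eq] at *
    rw [mul_smul_comm, hx, smul_smul, mul_comm, ← smul_smul]


/-- An `(S,⋆)`-axis: an idempotent whose left multiplication is semisimple with
eigenvalues in `S`, the eigenspaces decomposing `M` and obeying the fusion rule `⋆`. -/
def IsFusionAxis {F : Type} [Field F] [DecidableEq F] {M : Type}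
    [NonUnitalNonAssocCommRing M] [Module F M] [SMulCommClass F M M] [IsScalarTower F M M]
    (S : Finset F) (star : ↥S → ↥S → Set ↥S) (a : M) : Prop :=
  a * a = a ∧
  DirectSum.IsInternal (fun s : ↥S => eigSp a (s : F)) ∧
  ∀ s t : ↥S, ∀ x ∈ eigSp a (s : F), ∀ y ∈ eigSp a (t : F),
    x * y ∈ ⨆ u ∈ star s t, eigSp a (u : F)

/-!
Let `A` be the free nonassociative algebra on `n` generators and `U` its quotient by the common
kernel of the evaluations `A → N` at all `n`-tuples of `(S,⋆)`-axes in all commutative algebras `N`,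
i.e. the image of `A` in the product of these `N`. Being an `(S,⋆)`-axis is a family of polynomial
identities in the multiplication operator `L_a`: by Lagrange interpolation at the points of `S`,
`E = ⊕ E_s` says `∏_{s ∈ S} (L_a - s) = 0`, and the fusion rule says
`∏_{s ≠ u} (L_a - s) (x y) = 0` for `x ∈ E_s`, `y ∈ E_t`, `u ∉ s ⋆ t`. Such identities pass to
subalgebras of products, so the images `u_i` of the generators are axes of `U`. The universal
property is inherited from `A`, and a map `U → N` sending `u_i` to generators of `N` is onto.
-/

open Polynomial Lagrange

section Eigenspaces

variable {F M : Type*} [Field F] [AddCommGroup M] [Module F M] {f : Module.End F M}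

theorem Module.End.aeval_apply_eq_zero_of_mem_eigenspace {μ : F} {q : F[X]} (hq : X - C μ ∣ q)
    {x : M} (hx : x ∈ f.eigenspace μ) : aeval f q x = 0 := by
  obtain ⟨r, rfl⟩ := hq
  rw [mul_comm, map_mul, Module.End.mul_apply, map_sub, aeval_X, aeval_C, LinearMap.sub_apply,
    Module.End.mem_eigenspace_iff.mp hx, Module.algebraMap_end_apply, sub_self, map_zero]

theorem Module.End.iSup_eigenspace_le_ker_aeval {ι : Type*} {T : Set ι} {v : ι → F} {q : F[X]}
    (hq : ∀ i ∈ T, X - C (v i) ∣ q) :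
    ⨆ i ∈ T, f.eigenspace (v i) ≤ LinearMap.ker (aeval f q) :=
  iSup₂_le fun i hi _ hx => aeval_apply_eq_zero_of_mem_eigenspace (hq i hi) hx

variable [DecidableEq F]

theorem Module.End.aeval_nodal_erase_mem_eigenspace {S : Finset F} {μ : F} (hμ : μ ∈ S) {x : M}
    (hx : aeval f (nodal S id) x = 0) : aeval f (nodal (S.erase μ) id) x ∈ f.eigenspace μ := by
  rw [Module.End.mem_eigenspace_iff, ← sub_eq_zero]
  simpa only [nodal_eq_mul_nodal_erase hμ, map_mul, Module.End.mul_apply, map_sub, aeval_X,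
    aeval_C, LinearMap.sub_apply, Module.algebraMap_end_apply, id] using hx

/-- `z = ∑_μ ℓ_μ(f) z` for the Lagrange basis `ℓ_μ` at the points of `S`, where `ℓ_μ(f) z ∈ E_μ` is
a multiple of `∏_{s ≠ μ} (f - s) z`. -/
theorem Module.End.mem_iSup_eigenspace_of_aeval_nodal_eq_zero {S : Finset F} {T : Set S} {z : M}
    (hS : aeval f (nodal S id) z = 0)
    (hT : ∀ μ : S, μ ∉ T → aeval f (nodal (S.erase μ) id) z = 0) :
    z ∈ ⨆ μ ∈ T, f.eigenspace (μ : F) := by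
  rcases S.eq_empty_or_nonempty with rfl | hne
  · rw [nodal_empty, map_one, Module.End.one_apply] at hS
    rw [hS]
    exact Submodule.zero_mem _
  have hcomp : ∀ μ ∈ S, aeval f (Lagrange.basis S id μ) z =
      nodalWeight S id μ • aeval f (nodal (S.erase μ) id) z := fun μ hμ => by
    rw [basis_eq_prod_sub_inv_mul_nodal_div hμ, ← nodal_erase_eq_nodal_div hμ, ← smul_eq_C_mul,
      map_smul, LinearMap.smul_apply]
  have hsum : ∑ μ ∈ S, aeval f (Lagrange.basis S id μ) z = z := by
    rw [← LinearMap.sum_apply, ← map_sum, sum_basis (Set.injOn_id _) hne, map_one,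
      Module.End.one_apply]
  rw [← hsum]
  refine Submodule.sum_mem _ fun μ hμ => ?_
  rw [hcomp μ hμ]
  by_cases hμT : (⟨μ, hμ⟩ : S) ∈ T
  · exact Submodule.mem_iSup_of_mem ⟨μ, hμ⟩ (Submodule.mem_iSup_of_mem hμT
      (Submodule.smul_mem _ _ (aeval_nodal_erase_mem_eigenspace hμ hS)))
  · rw [hT ⟨μ, hμ⟩ hμT, smul_zero]
    exact Submodule.zero_mem _

end Eigenspaces

section Axes

variable {F M : Type} [Field F] [NonUnitalNonAssocCommRing M] [Module F M]
  [SMulCommClass F M M] [IsScalarTower F M M]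

theorem eigSp_eq_eigenspace (a : M) (s : F) :
    eigSp a s = Module.End.eigenspace (LinearMap.mulLeft F a) s := by
  ext x
  rw [Module.End.mem_eigenspace_iff]
  rfl

variable [DecidableEq F] {S : Finset F} {star : S → S → Set S}

theorem isFusionAxis_iff {a : M} :
    IsFusionAxis S star a ↔ a * a = a ∧ aeval (LinearMap.mulLeft F a) (nodal S id) = 0 ∧
      ∀ s t : S, ∀ x ∈ eigSp a (s : F), ∀ y ∈ eigSp a (t : F), ∀ u : S, u ∉ star s t →
        aeval (LinearMap.mulLeft F a) (nodal (S.erase u) id) (x * y) = 0 := by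
  simp only [IsFusionAxis, eigSp_eq_eigenspace]
  set f : Module.End F M := LinearMap.mulLeft F a
  refine and_congr_right fun _ => ⟨fun ⟨hint, hfus⟩ => ⟨?_, ?_⟩, fun ⟨hann, hfus⟩ => ⟨?_, ?_⟩⟩
  · ext x
    have hx : x ∈ ⨆ s ∈ (Set.univ : Set S), f.eigenspace (s : F) := by
      rw [iSup_univ, hint.submodule_iSup_eq_top]
      trivial
    exact Module.End.iSup_eigenspace_le_ker_aeval
      (fun s _ => X_sub_C_dvd_nodal id s.2) hx
  · intro s t x hx y hy u hu
    refine Module.End.iSup_eigenspace_le_ker_aeval (fun w hw => X_sub_C_dvd_nodal id ?_)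
      (hfus s t x hx y hy)
    exact Finset.mem_erase.mpr ⟨fun h => hu (Subtype.ext h ▸ hw), w.2⟩
  · refine DirectSum.isInternal_submodule_of_iSupIndep_of_iSup_eq_top
      ((f.eigenspaces_iSupIndep).comp Subtype.coe_injective) ?_
    rw [eq_top_iff]
    intro z _
    rw [← iSup_univ]
    exact Module.End.mem_iSup_eigenspace_of_aeval_nodal_eq_zero
      (LinearMap.congr_fun hann z) fun μ hμ => (hμ (Set.mem_univ μ)).elim
  · intro s t x hx y hy
    exact Module.End.mem_iSup_eigenspace_of_aeval_nodal_eq_zero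
      (LinearMap.congr_fun hann _) (hfus s t x hx y hy)

end Axes

theorem LinearMap.comp_aeval_of_comp_eq {R M₁ M₂ : Type*} [CommRing R] [AddCommGroup M₁]
    [Module R M₁] [AddCommGroup M₂] [Module R M₂] {f₁ : Module.End R M₁} {f₂ : Module.End R M₂}
    (g : M₁ →ₗ[R] M₂) (h : g ∘ₗ f₁ = f₂ ∘ₗ g) (q : R[X]) :
    g ∘ₗ aeval f₁ q = aeval f₂ q ∘ₗ g := by
  induction q using Polynomial.induction_on with
  | C c => ext x; simp
  | add p q hp hq => rw [map_add, map_add, LinearMap.comp_add, LinearMap.add_comp, hp, hq]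
  | monomial k c ih =>
    rw [pow_succ, ← mul_assoc, map_mul (aeval f₁) _ X, map_mul (aeval f₂) _ X, aeval_X, aeval_X,
      Module.End.mul_eq_comp, Module.End.mul_eq_comp, ← LinearMap.comp_assoc, ih,
      LinearMap.comp_assoc, h, LinearMap.comp_assoc]

theorem NonUnitalAlgHom.map_aeval_mulLeft {R A B : Type*} [CommRing R] [NonUnitalNonAssocRing A]
    [Module R A] [SMulCommClass R A A] [NonUnitalNonAssocRing B] [Module R B]
    [SMulCommClass R B B] (ψ : A →ₙₐ[R] B) (a : A) (q : R[X]) (x : A) :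
    ψ (aeval (LinearMap.mulLeft R a) q x) = aeval (LinearMap.mulLeft R (ψ a)) q (ψ x) :=
  LinearMap.congr_fun (LinearMap.comp_aeval_of_comp_eq (ψ : A →ₗ[R] B)
    (LinearMap.ext fun y => map_mul ψ a y) q) x

theorem NonUnitalAlgHom.map_mem_eigSp {F A B : Type} [Field F] [NonUnitalNonAssocCommRing A]
    [Module F A] [SMulCommClass F A A] [IsScalarTower F A A] [NonUnitalNonAssocCommRing B]
    [Module F B] [SMulCommClass F B B] [IsScalarTower F B B] (ψ : A →ₙₐ[F] B) {a x : A} {s : F}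
    (hx : x ∈ eigSp a s) : ψ x ∈ eigSp (ψ a) s := by
  change ψ a * ψ x = s • ψ x
  rw [← map_mul, ← map_smul]
  exact congrArg ψ hx

theorem isFusionAxis_of_jointly_injective {F M : Type} [Field F] [DecidableEq F]
    [NonUnitalNonAssocCommRing M] [Module F M] [SMulCommClass F M M] [IsScalarTower F M M]
    {S : Finset F} {star : S → S → Set S} {ι : Type*} {N : ι → Type}
    [∀ j, NonUnitalNonAssocCommRing (N j)] [∀ j, Module F (N j)]
    [∀ j, SMulCommClass F (N j) (N j)] [∀ j, IsScalarTower F (N j) (N j)]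
    (ψ : ∀ j, M →ₙₐ[F] N j) (hψ : ∀ x, (∀ j, ψ j x = 0) → x = 0) {a : M}
    (ha : ∀ j, IsFusionAxis S star (ψ j a)) : IsFusionAxis S star a := by
  simp only [isFusionAxis_iff] at ha ⊢
  refine ⟨?_, ?_, ?_⟩
  · refine sub_eq_zero.mp (hψ _ fun j => ?_)
    rw [map_sub, map_mul, (ha j).1, sub_self]
  · refine LinearMap.ext fun x => hψ _ fun j => ?_
    rw [NonUnitalAlgHom.map_aeval_mulLeft, (ha j).2.1, LinearMap.zero_apply]
  · intro s t x hx y hy u hu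
    refine hψ _ fun j => ?_
    rw [NonUnitalAlgHom.map_aeval_mulLeft, map_mul]
    exact (ha j).2.2 s t _ ((ψ j).map_mem_eigSp hx) _ ((ψ j).map_mem_eigSp hy) u hu

section JointKernel

variable {R A : Type*} [CommRing R] [NonUnitalNonAssocRing A] [Module R A] {ι : Type*}
  {N : ι → Type*} [∀ j, NonUnitalNonAssocCommRing (N j)] [∀ j, Module R (N j)]
  (ψ : ∀ j, A →ₙₐ[R] N j)

/-- `A ⧸ jointKer ψ` is the image of `A` in `∏ j, N j`, built as a quotient of `A` so that it
lives in the universe of `A`. -/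
def jointKer : Submodule R A := ⨅ j, LinearMap.ker (ψ j : A →ₗ[R] N j)

namespace jointKer

variable {ψ}

theorem mem_iff {x : A} : x ∈ jointKer ψ ↔ ∀ j, ψ j x = 0 := by
  simp [jointKer, Submodule.mem_iInf]

theorem mk_eq_mk_iff {x y : A} :
    (Submodule.Quotient.mk x : A ⧸ jointKer ψ) = Submodule.Quotient.mk y ↔ ∀ j, ψ j x = ψ j y := by
  simp only [Submodule.Quotient.eq, mem_iff, map_sub, sub_eq_zero]

instance : Mul (A ⧸ jointKer ψ) where
  mul := Quotient.map₂ (· * ·) fun x x' hx y y' hy => Quotient.exact <| mk_eq_mk_iff.mpr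
    fun j => by
      rw [map_mul, map_mul, mk_eq_mk_iff.mp (Quotient.sound hx),
        mk_eq_mk_iff.mp (Quotient.sound hy)]

instance : NonUnitalNonAssocCommRing (A ⧸ jointKer ψ) where
  __ := Submodule.Quotient.addCommGroup (jointKer ψ)
  left_distrib := by
    rintro ⟨x⟩ ⟨y⟩ ⟨z⟩
    exact congrArg Submodule.Quotient.mk (mul_add x y z)
  right_distrib := by
    rintro ⟨x⟩ ⟨y⟩ ⟨z⟩
    exact congrArg Submodule.Quotient.mk (add_mul x y z)
  zero_mul := by
    rintro ⟨x⟩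
    exact congrArg Submodule.Quotient.mk (zero_mul x)
  mul_zero := by
    rintro ⟨x⟩
    exact congrArg Submodule.Quotient.mk (mul_zero x)
  mul_comm := by
    rintro ⟨x⟩ ⟨y⟩
    exact mk_eq_mk_iff.mpr fun j => by rw [map_mul, map_mul, mul_comm]

instance [SMulCommClass R A A] : SMulCommClass R (A ⧸ jointKer ψ) (A ⧸ jointKer ψ) where
  smul_comm := by
    rintro r ⟨x⟩ ⟨y⟩
    exact congrArg Submodule.Quotient.mk (smul_comm r x y)

instance [IsScalarTower R A A] : IsScalarTower R (A ⧸ jointKer ψ) (A ⧸ jointKer ψ) where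
  smul_assoc := by
    rintro r ⟨x⟩ ⟨y⟩
    exact congrArg Submodule.Quotient.mk (smul_assoc r x y)

variable (ψ)

def mkₙₐ : A →ₙₐ[R] A ⧸ jointKer ψ where
  __ := (jointKer ψ).mkQ
  map_zero' := rfl
  map_mul' _ _ := rfl

theorem mkₙₐ_surjective : Function.Surjective (mkₙₐ ψ) :=
  (jointKer ψ).mkQ_surjective

def liftₙₐ (j : ι) : A ⧸ jointKer ψ →ₙₐ[R] N j where
  __ := (jointKer ψ).liftQ (ψ j : A →ₗ[R] N j) (iInf_le _ j)
  map_zero' := map_zero _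
  map_mul' := by
    rintro ⟨x⟩ ⟨y⟩
    exact map_mul (ψ j) x y

theorem hom_ext {B : Type*} [NonUnitalNonAssocSemiring B] [Module R B]
    {φ φ' : A ⧸ jointKer ψ →ₙₐ[R] B} (h : φ.comp (mkₙₐ ψ) = φ'.comp (mkₙₐ ψ)) : φ = φ' := by
  ext z
  obtain ⟨x, rfl⟩ := mkₙₐ_surjective ψ z
  exact NonUnitalAlgHom.congr_fun h x

theorem eq_zero_of_forall_liftₙₐ_eq_zero {z : A ⧸ jointKer ψ} (hz : ∀ j, liftₙₐ ψ j z = 0) :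
    z = 0 := by
  obtain ⟨x, rfl⟩ := mkₙₐ_surjective ψ z
  exact (Submodule.Quotient.mk_eq_zero _).mpr (mem_iff.mpr hz)

end jointKer

end JointKernel

theorem FreeNonUnitalNonAssocAlgebra.range_lift {R X A : Type*} [CommSemiring R]
    [NonUnitalNonAssocSemiring A] [Module R A] [IsScalarTower R A A] [SMulCommClass R A A]
    (f : X → A) : NonUnitalAlgHom.range (lift R f) = NonUnitalAlgebra.adjoin R (Set.range f) := by
  refine le_antisymm ?_ (NonUnitalAlgebra.adjoin_le ?_)
  · set T := NonUnitalAlgebra.adjoin R (Set.range f)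
    let τ : FreeNonUnitalNonAssocAlgebra R X →ₙₐ[R] T :=
      lift R fun x => ⟨f x, NonUnitalAlgebra.subset_adjoin R (Set.mem_range_self x)⟩
    have hτ : (NonUnitalSubalgebraClass.subtype T).comp τ = lift R f :=
      hom_ext R fun x => by simp [τ]
    rintro _ ⟨y, rfl⟩
    rw [← hτ]
    exact (τ y).2
  · rintro _ ⟨x, rfl⟩
    exact ⟨of R x, lift_of_apply R f x⟩

theorem FreeNonUnitalNonAssocAlgebra.lift_surjective_iff {R X A : Type*} [CommSemiring R]
    [NonUnitalNonAssocSemiring A] [Module R A] [IsScalarTower R A A] [SMulCommClass R A A]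
    (f : X → A) :
    Function.Surjective (lift R f) ↔ NonUnitalAlgebra.adjoin R (Set.range f) = ⊤ := by
  rw [← NonUnitalAlgebra.range_eq_top, range_lift]

section Universal

open FreeNonUnitalNonAssocAlgebra

variable (F : Type) [Field F] [DecidableEq F] (S : Finset F) (star : S → S → Set S) (n : ℕ)

structure MarkedAxialAlgebra where
  alg : CommNAAlg F
  axis : Fin n → alg.carrier
  isFusionAxis_axis : ∀ i, IsFusionAxis S star (axis i)

abbrev UniversalAxialAlgebra : Type :=
  FreeNonUnitalNonAssocAlgebra F (Fin n) ⧸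
    jointKer fun P : MarkedAxialAlgebra F S star n => lift F P.axis

noncomputable def universalAxis (i : Fin n) : UniversalAxialAlgebra F S star n :=
  jointKer.mkₙₐ _ (of F i)

theorem lift_universalAxis : lift F (universalAxis F S star n) = jointKer.mkₙₐ _ :=
  hom_ext F fun i => lift_of_apply F _ i

variable {F S star n}

theorem liftₙₐ_universalAxis (P : MarkedAxialAlgebra F S star n) (i : Fin n) :
    jointKer.liftₙₐ _ P (universalAxis F S star n i) = P.axis i :=
  lift_of_apply F P.axis i

theorem isFusionAxis_universalAxis (i : Fin n) :
    IsFusionAxis S star (universalAxis F S star n i) :=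
  isFusionAxis_of_jointly_injective (jointKer.liftₙₐ _)
    (fun _ => jointKer.eq_zero_of_forall_liftₙₐ_eq_zero _)
    fun P => (liftₙₐ_universalAxis P i).symm ▸ P.isFusionAxis_axis i

theorem adjoin_range_universalAxis :
    NonUnitalAlgebra.adjoin F (Set.range (universalAxis F S star n)) = ⊤ := by
  rw [← lift_surjective_iff, lift_universalAxis]
  exact jointKer.mkₙₐ_surjective _

theorem comp_mkₙₐ_eq_lift {N : Type} [NonUnitalNonAssocCommRing N] [Module F N]
    [SMulCommClass F N N] [IsScalarTower F N N] {b : Fin n → N}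
    (φ : UniversalAxialAlgebra F S star n →ₙₐ[F] N)
    (hφ : ∀ i, φ (universalAxis F S star n i) = b i) :
    φ.comp (jointKer.mkₙₐ _) = lift F b :=
  hom_ext F fun i => (hφ i).trans (lift_of_apply F b i).symm

end Universal

theorem universal_axial_algebra_general (F : Type) [Field F] [DecidableEq F]
    (S : Finset F) (star : ↥S → ↥S → Set ↥S)
    (n : ℕ) :
    ∃ (U : CommNAAlg F) (u : Fin n → U.carrier),
      (∀ i, IsFusionAxis S star (u i)) ∧
      NonUnitalAlgebra.adjoin F (Set.range u) = ⊤ ∧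
      ∀ (N : CommNAAlg F) (b : Fin n → N.carrier),
        (∀ i, IsFusionAxis S star (b i)) →
        NonUnitalAlgebra.adjoin F (Set.range b) = ⊤ →
        (∃! φ : U.carrier →ₙₐ[F] N.carrier, ∀ i, φ (u i) = b i) ∧
        ∀ φ : U.carrier →ₙₐ[F] N.carrier, (∀ i, φ (u i) = b i) →
          Function.Surjective φ := by
  refine ⟨⟨UniversalAxialAlgebra F S star n⟩, universalAxis F S star n,
    isFusionAxis_universalAxis, adjoin_range_universalAxis, fun N b hb hgen => ?_⟩
  let P : MarkedAxialAlgebra F S star n := ⟨N, b, hb⟩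
  refine ⟨⟨jointKer.liftₙₐ _ P, liftₙₐ_universalAxis P, fun φ hφ => ?_⟩, fun φ hφ => ?_⟩
  · exact jointKer.hom_ext _
      ((comp_mkₙₐ_eq_lift φ hφ).trans (comp_mkₙₐ_eq_lift _ (liftₙₐ_universalAxis P)).symm)
  · refine Function.Surjective.of_comp (g := jointKer.mkₙₐ _) ?_
    rwa [← NonUnitalAlgHom.coe_comp, comp_mkₙₐ_eq_lift φ hφ,
      FreeNonUnitalNonAssocAlgebra.lift_surjective_iff]

/-- Corollary 3: the category of `n`-generated `(S,⋆)`-axial algebras has a universal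
object. -/
theorem universal_axial_algebra (F : Type) [Field F] [DecidableEq F]
    (hchar : ringChar F ≠ 2) (S : Finset F) (star : ↥S → ↥S → Set ↥S)
    (n : ℕ) (hn : 0 < n) :
    ∃ (U : CommNAAlg F) (u : Fin n → U.carrier),
      (∀ i, IsFusionAxis S star (u i)) ∧
      NonUnitalAlgebra.adjoin F (Set.range u) = ⊤ ∧
      ∀ (N : CommNAAlg F) (b : Fin n → N.carrier),
        (∀ i, IsFusionAxis S star (b i)) →
        NonUnitalAlgebra.adjoin F (Set.range b) = ⊤ →
        (∃! φ : U.carrier →ₙₐ[F] N.carrier, ∀ i, φ (u i) = b i) ∧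
        ∀ φ : U.carrier →ₙₐ[F] N.carrier, (∀ i, φ (u i) = b i) →
          Function.Surjective φ :=
  universal_axial_algebra_general F S star n
end

section
/- Let M be a commutative nonassociative F-algebra and a an F_Φ(η)-axis of M. Then the F-linear map τ_a : M → M defined by τ_a(x) = x for x ∈ E₁(a) ⊕ E₀(a) and τ_a(x) = −x for x ∈ E_η(a) is an F-algebra automorphism of M. -/
/-- An `F_Φ(η)`-axis: an idempotent whose eigenspaces for `1, 0, η` decompose `M`
and obey the Jordan-type fusion rule with parameter `Φ`. -/
structure IsJordanAxis {F M : Type} [Field F] [NonUnitalNonAssocCommRing M] [Module F M]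
    [SMulCommClass F M M] [IsScalarTower F M M] (Φ : Set F) (η : F) (a : M) : Prop where
  idem : a * a = a
  indep : ∀ x1 ∈ eigSp a (1 : F), ∀ x0 ∈ eigSp a (0 : F), ∀ xe ∈ eigSp a η,
    x1 + x0 + xe = 0 → x1 = 0 ∧ x0 = 0 ∧ xe = 0
  total : ∀ x : M, ∃ x1 ∈ eigSp a (1 : F), ∃ x0 ∈ eigSp a (0 : F), ∃ xe ∈ eigSp a η,
    x = x1 + x0 + xe
  mul_11 : ∀ x ∈ eigSp a (1 : F), ∀ y ∈ eigSp a (1 : F), x * y ∈ eigSp a (1 : F)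
  mul_00 : ∀ x ∈ eigSp a (0 : F), ∀ y ∈ eigSp a (0 : F), x * y ∈ eigSp a (0 : F)
  mul_01 : ∀ x ∈ eigSp a (0 : F), ∀ y ∈ eigSp a (1 : F), x * y ∈ ⨆ t ∈ Φ, eigSp a t
  mul_0e : ∀ x ∈ eigSp a (0 : F), ∀ y ∈ eigSp a η, x * y ∈ eigSp a η
  mul_1e : ∀ x ∈ eigSp a (1 : F), ∀ y ∈ eigSp a η, x * y ∈ eigSp a η
  mul_ee : ∀ x ∈ eigSp a η, ∀ y ∈ eigSp a η, x * y ∈ eigSp a (0 : F) ⊔ eigSp a (1 : F)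

/-- The defining property of the Miyamoto involution of the axis `a`. -/
def IsMiyamoto {F M : Type} [Field F] [NonUnitalNonAssocCommRing M] [Module F M]
    [SMulCommClass F M M] [IsScalarTower F M M] (η : F) (a : M) (τ : M →ₗ[F] M) : Prop :=
  (∀ x ∈ eigSp a (1 : F) ⊔ eigSp a (0 : F), τ x = x) ∧ ∀ x ∈ eigSp a η, τ x = -x

section Aux

variable {F M : Type} [Field F] [NonUnitalNonAssocCommRing M] [Module F M]
    [SMulCommClass F M M] [IsScalarTower F M M]

lemma mem_eigSp {a x : M} {s : F} : x ∈ eigSp a s ↔ a * x = s • x := Iff.rfl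

lemma miy_fix1 {η : F} {a : M} {τ : M →ₗ[F] M} (hτ : IsMiyamoto η a τ)
    {x : M} (hx : x ∈ eigSp a (1 : F)) : τ x = x :=
  hτ.1 x (Submodule.mem_sup_left hx)

lemma miy_fix0 {η : F} {a : M} {τ : M →ₗ[F] M} (hτ : IsMiyamoto η a τ)
    {x : M} (hx : x ∈ eigSp a (0 : F)) : τ x = x :=
  hτ.1 x (Submodule.mem_sup_right hx)

lemma miy_fix01 {η : F} {a : M} {τ : M →ₗ[F] M} (hτ : IsMiyamoto η a τ)
    {x : M} (hx : x ∈ eigSp a (0 : F) ⊔ eigSp a (1 : F)) : τ x = x := by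
  rw [sup_comm] at hx
  exact hτ.1 x hx

lemma miy_neg {η : F} {a : M} {τ : M →ₗ[F] M} (hτ : IsMiyamoto η a τ)
    {x : M} (hx : x ∈ eigSp a η) : τ x = -x :=
  hτ.2 x hx

end Aux

/-- The Miyamoto map of an `F_Φ(η)`-axis is well defined (there is a unique linear map
which is the identity on `E₁(a) ⊕ E₀(a)` and `−id` on `E_η(a)`), and any such map is an
`F`-algebra automorphism of `M`. -/
theorem miyamoto_is_automorphism {F M : Type} [Field F] [NonUnitalNonAssocCommRing M]
    [Module F M] [SMulCommClass F M M] [IsScalarTower F M M]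
    (hchar : ringChar F ≠ 2)
    (Φ : Set F) (hΦ : Φ ⊆ {0, 1}) (η : F) (hη0 : η ≠ 0) (hη1 : η ≠ 1)
    (a : M) (h : IsJordanAxis Φ η a) :
    (∃! τ : M →ₗ[F] M, IsMiyamoto η a τ) ∧
      ∀ τ : M →ₗ[F] M, IsMiyamoto η a τ →
        (∀ x y : M, τ (x * y) = τ x * τ y) ∧ Function.Bijective τ := by
  have hΦle : (⨆ t ∈ Φ, eigSp a t) ≤ eigSp a (0 : F) ⊔ eigSp a (1 : F) := by
    refine iSup₂_le fun t ht => ?_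
    rcases hΦ ht with rfl | ht1
    · exact le_sup_left
    · rcases ht1 with rfl
      exact le_sup_right
  have hd : η ^ 2 - η ≠ 0 := by
    intro hc
    have h2 : η * (η - 1) = 0 := by linear_combination hc
    rcases mul_eq_zero.mp h2 with h' | h'
    · exact hη0 h'
    · exact hη1 (sub_eq_zero.mp h')
  set c : F := 2 * (η ^ 2 - η)⁻¹ with hc
  set L : M →ₗ[F] M := LinearMap.mulLeft F a with hL
  set τ₀ : M →ₗ[F] M := LinearMap.id - c • (L ∘ₗ L - L) with hτ₀
  have hτ₀apply : ∀ x : M, τ₀ x = x - c • (a * (a * x) - a * x) := by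
    intro x; simp [hτ₀, hL, LinearMap.mulLeft_apply]
  have hτ₀miy : IsMiyamoto η a τ₀ := by
    constructor
    · intro x hx
      obtain ⟨u, hu, v, hv, rfl⟩ := Submodule.mem_sup.mp hx
      rw [mem_eigSp] at hu hv
      have hu' : a * u = u := by rw [hu, one_smul]
      have key : a * (u + v) = u := by rw [mul_add, hu', hv, zero_smul, add_zero]
      rw [hτ₀apply, key, hu', sub_self, smul_zero, sub_zero]
    · intro x hx
      rw [mem_eigSp] at hx
      rw [hτ₀apply, hx, mul_smul_comm, hx, smul_smul, ← sub_smul, smul_smul]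
      have : c * (η * η - η) = 2 := by
        have hsq : η * η - η = η ^ 2 - η := by ring
        rw [hc, hsq, mul_assoc, inv_mul_cancel₀ hd, mul_one]
      rw [this, two_smul]
      abel
  -- the key: any Miyamoto map agrees with the canonical value on decompositions
  have hval : ∀ τ : M →ₗ[F] M, IsMiyamoto η a τ →
      ∀ x1 ∈ eigSp a (1 : F), ∀ x0 ∈ eigSp a (0 : F), ∀ xe ∈ eigSp a η,
        τ (x1 + x0 + xe) = x1 + x0 - xe := by
    intro τ hτ x1 h1 x0 h0 xe he
    rw [map_add, map_add, miy_fix1 hτ h1, miy_fix0 hτ h0, miy_neg hτ he, sub_eq_add_neg]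
  have huniq : ∀ τ : M →ₗ[F] M, IsMiyamoto η a τ → τ = τ₀ := by
    intro τ hτ
    ext x
    obtain ⟨x1, h1, x0, h0, xe, he, rfl⟩ := h.total x
    rw [hval τ hτ x1 h1 x0 h0 xe he, hval τ₀ hτ₀miy x1 h1 x0 h0 xe he]
  refine ⟨⟨τ₀, hτ₀miy, huniq⟩, fun τ hτ => ⟨?_, ?_⟩⟩
  · -- multiplicativity
    intro x y
    obtain ⟨x1, hx1, x0, hx0, xe, hxe, rfl⟩ := h.total x
    obtain ⟨y1, hy1, y0, hy0, ye, hye, rfl⟩ := h.total y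
    have e11 : τ (x1 * y1) = x1 * y1 := miy_fix1 hτ (h.mul_11 x1 hx1 y1 hy1)
    have e10 : τ (x1 * y0) = x1 * y0 := by
      rw [mul_comm]; exact miy_fix01 hτ (hΦle (h.mul_01 y0 hy0 x1 hx1))
    have e01 : τ (x0 * y1) = x0 * y1 := miy_fix01 hτ (hΦle (h.mul_01 x0 hx0 y1 hy1))
    have e00 : τ (x0 * y0) = x0 * y0 := miy_fix0 hτ (h.mul_00 x0 hx0 y0 hy0)
    have e1e : τ (x1 * ye) = -(x1 * ye) := miy_neg hτ (h.mul_1e x1 hx1 ye hye)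
    have e0e : τ (x0 * ye) = -(x0 * ye) := miy_neg hτ (h.mul_0e x0 hx0 ye hye)
    have ee1 : τ (xe * y1) = -(xe * y1) := by
      rw [mul_comm]; exact miy_neg hτ (h.mul_1e y1 hy1 xe hxe)
    have ee0 : τ (xe * y0) = -(xe * y0) := by
      rw [mul_comm]; exact miy_neg hτ (h.mul_0e y0 hy0 xe hxe)
    have eee : τ (xe * ye) = xe * ye := miy_fix01 hτ (h.mul_ee xe hxe ye hye)
    have expand : (x1 + x0 + xe) * (y1 + y0 + ye) =
        (x1 * y1 + x1 * y0 + x0 * y1 + x0 * y0 + xe * ye) +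
        (x1 * ye + x0 * ye + xe * y1 + xe * y0) := by
      simp only [add_mul, mul_add]; abel
    rw [expand]
    have hτval : τ (x1 + x0 + xe) = x1 + x0 - xe := hval τ hτ x1 hx1 x0 hx0 xe hxe
    have hτval' : τ (y1 + y0 + ye) = y1 + y0 - ye := hval τ hτ y1 hy1 y0 hy0 ye hye
    rw [hτval, hτval']
    simp only [map_add, e11, e10, e01, e00, e1e, e0e, ee1, ee0, eee]
    simp only [sub_mul, mul_sub, add_mul, mul_add]
    abel
  · -- bijectivity: τ is an involution
    have hinv : Function.Involutive τ := by
      intro x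
      obtain ⟨x1, h1, x0, h0, xe, he, rfl⟩ := h.total x
      rw [hval τ hτ x1 h1 x0 h0 xe he, sub_eq_add_neg, map_add, map_add,
        miy_fix1 hτ h1, miy_fix0 hτ h0, map_neg, miy_neg hτ he, neg_neg]
    exact hinv.bijective
end

section
/- Let (M, {a₀, a₁}) be a 2-generated F_Φ(η)-axial algebra. Then for every i ∈ ℤ_{>0}: (a) x_i := p_{i,0} + (η/2)(a_i + a_{−i}) lies in E₁(a₀); (b) z_i := p_{i,0} + η a₀ + ((η−1)/2)(a_i + a_{−i}) lies in E₀(a₀); (c) a₀ p_{i,0} = (1−η) p_{i,0} − η² a₀ + ((η − η²)/2)(a_i + a_{−i}). -/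
/-- Basic products in a 2-generated non-primitive axial algebra of Jordan type:
`x_i ∈ E₁(a₀)`, `z_i ∈ E₀(a₀)` and the value of `a₀ · p_{i,0}`. -/
theorem jordan_basic_products {F M : Type} [Field F] [NonUnitalNonAssocCommRing M] [Module F M]
    [SMulCommClass F M M] [IsScalarTower F M M]
    (hchar : ringChar F ≠ 2)
    (Φ : Set F) (hΦ : Φ ⊆ {0, 1}) (η : F) (hη0 : η ≠ 0) (hη1 : η ≠ 1)
    (a₀ a₁ : M) (h₀ : IsJordanAxis Φ η a₀) (h₁ : IsJordanAxis Φ η a₁)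
    (hgen : NonUnitalAlgebra.adjoin F {a₀, a₁} = ⊤)
    (τ₀ τ₁ : M →ₗ[F] M) (hτ₀ : IsMiyamoto η a₀ τ₀) (hτ₁ : IsMiyamoto η a₁ τ₁)
    (a : ℤ → M) (ha0 : a 0 = a₀) (ha1 : a 1 = a₁)
    (hτ0a : ∀ k : ℤ, τ₀ (a k) = a (-k)) (hτ1a : ∀ k : ℤ, τ₁ (a k) = a (2 - k))
    (p : ℤ → ℤ → M)
    (hp : ∀ i j : ℤ, p i j = a j * a (i + j) - η • (a j + a (i + j)))
    :
    ∀ i : ℤ, 0 < i →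
      (p i 0 + (η / 2) • (a i + a (-i)) ∈ eigSp a₀ (1 : F)) ∧
      (p i 0 + η • a₀ + ((η - 1) / 2) • (a i + a (-i)) ∈ eigSp a₀ (0 : F)) ∧
      a₀ * p i 0 =
        (1 - η) • p i 0 - (η ^ 2) • a₀ + ((η - η ^ 2) / 2) • (a i + a (-i)) := by
  have h2 : (2 : F) ≠ 0 := Ring.two_ne_zero hchar
  intro i _
  obtain ⟨x1, hm1, x0, hm0, xe, hme, hai⟩ := h₀.total (a i)
  have hx1 : a₀ * x1 = (1 : F) • x1 := hm1
  have hx0 : a₀ * x0 = (0 : F) • x0 := hm0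
  have hxe : a₀ * xe = η • xe := hme
  have hidem : a₀ * a₀ = a₀ := h₀.idem
  have hani : a (-i) = x1 + x0 - xe := by
    rw [← hτ0a i, hai, map_add, map_add, hτ₀.1 x1 (Submodule.mem_sup_left hm1),
      hτ₀.1 x0 (Submodule.mem_sup_right hm0), hτ₀.2 xe hme]
    abel
  have hpi : p i 0 = a₀ * a i - η • (a₀ + a i) := by
    rw [hp i 0, add_zero, ha0]
  have hmul : a₀ * a i = x1 + η • xe := by
    rw [hai, mul_add, mul_add, hx1, hx0, hxe, one_smul, zero_smul, add_zero]
  have hpval : p i 0 = (1 - η) • x1 - η • x0 - η • a₀ := by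
    rw [hpi, hmul, hai]
    module
  refine ⟨?_, ?_, ?_⟩
  · show a₀ * _ = (1 : F) • _
    rw [hpval, hai, hani]
    have : (1 - η) • x1 - η • x0 - η • a₀ + (η / 2) • (x1 + x0 + xe + (x1 + x0 - xe))
        = x1 - η • a₀ := by
      match_scalars <;> field_simp <;> ring
    rw [this]
    rw [mul_sub, mul_smul_comm, hx1, hidem, one_smul]
    module
  · show a₀ * _ = (0 : F) • _
    rw [hpval, hai, hani]
    have : (1 - η) • x1 - η • x0 - η • a₀ + η • a₀
        + ((η - 1) / 2) • (x1 + x0 + xe + (x1 + x0 - xe)) = -x0 := by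
      match_scalars <;> field_simp <;> ring
    rw [this, mul_neg, hx0]
    module
  · rw [hpval, hai, hani, mul_sub, mul_sub, mul_smul_comm, mul_smul_comm, mul_smul_comm,
      hx1, hx0, hidem]
    match_scalars <;> field_simp <;> ring
end

section
/- Let (M, {a₀, a₁}) be a 2-generated F_Φ(η)-axial algebra (any Φ ⊆ {0,1}). Then p₁p₁ = ((2η−1)/2)·a₀p_{2,1} − (η²/2)·p_{2,1} − (η²−η)·p_{2,0} + ((8η² − 12η + 3)/2)·p₁ + (η(2η−1)²/2)·a₀ + (3η(η−1)(2η−1)/4)·(a₁ + a_{−1}). -/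
section Framework

variable {F M : Type} [Field F] [NonUnitalNonAssocCommRing M] [Module F M]
    [SMulCommClass F M M] [IsScalarTower F M M]

lemma mem_eig (x : M) {y : M} {s : F} (h : y ∈ eigSp x s) : x * y = s • y := h

lemma tau_decomp {η : F} {x : M} {τ : M →ₗ[F] M} (hτ : IsMiyamoto η x τ)
    {z1 z0 ze : M} (m1 : z1 ∈ eigSp x (1:F)) (m0 : z0 ∈ eigSp x (0:F))
    (me : ze ∈ eigSp x η) : τ (z1 + z0 + ze) = z1 + z0 - ze := by
  have h1 : τ (z1 + z0) = z1 + z0 := hτ.1 _ (Submodule.add_mem_sup m1 m0)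
  have h2 : τ ze = -ze := hτ.2 _ me
  rw [map_add, h1, h2, sub_eq_add_neg]

lemma mulA (hchar : ringChar F ≠ 2) {Φ : Set F} {η : F} {x : M} (hx : IsJordanAxis Φ η x)
    {τ : M →ₗ[F] M} (hτ : IsMiyamoto η x τ) (z : M) :
    x * (x * z) = x * z + ((η^2 - η)/2) • (z - τ z) := by
  obtain ⟨z1, m1, z0, m0, ze, me, hz⟩ := hx.total z
  subst hz
  have e1 : x * z1 = z1 := by have := mem_eig x m1; rwa [one_smul] at this
  have e0 : x * z0 = 0 := by have := mem_eig x m0; rwa [zero_smul] at this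
  have ee : x * ze = η • ze := mem_eig x me
  have h2 : (2:F) ≠ 0 := Ring.two_ne_zero hchar
  rw [tau_decomp hτ m1 m0 me]
  simp only [mul_add, e1, e0, ee, mul_smul_comm, add_zero, zero_add, mul_zero]
  match_scalars <;> field_simp <;> ring

-- cancel 2 in the module
lemma half_cancel (hchar : ringChar F ≠ 2) {z : M} (h : z + z = 0) : z = 0 := by
  have h2 : (2:F) ≠ 0 := Ring.two_ne_zero hchar
  have : ((2:F)) • z = 0 := by rw [two_smul]; exact h
  calc z = ((2:F)⁻¹ * 2) • z := by rw [inv_mul_cancel₀ h2, one_smul]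
  _ = (2:F)⁻¹ • (((2:F)) • z) := by rw [mul_smul]
  _ = 0 := by rw [this, smul_zero]

lemma odd_mem (hchar : ringChar F ≠ 2) {Φ : Set F} {η : F} {x : M} (hx : IsJordanAxis Φ η x)
    {τ : M →ₗ[F] M} (hτ : IsMiyamoto η x τ) {w : M} (hw : τ w = -w) :
    w ∈ eigSp x η := by
  obtain ⟨z1, m1, z0, m0, ze, me, hz⟩ := hx.total w
  subst hz
  rw [tau_decomp hτ m1 m0 me] at hw
  have hsum : (z1 + z0) + (z1 + z0) = 0 := by
    have := hw
    abel_nf at this ⊢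
    linear_combination (norm := abel) this
  have hz10 : z1 + z0 = 0 := half_cancel hchar hsum
  have h0 : z1 + z0 + (0:M) = 0 := by rw [add_zero]; exact hz10
  obtain ⟨e1, e0, -⟩ := hx.indep z1 m1 z0 m0 0 (Submodule.zero_mem _) h0
  have : z1 + z0 + ze = ze := by rw [e1, e0]; abel
  rw [this]; exact me

lemma even_parts (hchar : ringChar F ≠ 2) {Φ : Set F} {η : F} {x : M} (hx : IsJordanAxis Φ η x)
    {τ : M →ₗ[F] M} (hτ : IsMiyamoto η x τ) {z : M} (hz : τ z = z) :
    x * z ∈ eigSp x (1:F) ∧ z - x * z ∈ eigSp x (0:F) := by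
  obtain ⟨z1, m1, z0, m0, ze, me, hd⟩ := hx.total z
  subst hd
  rw [tau_decomp hτ m1 m0 me] at hz
  have hze : ze = 0 := by
    apply half_cancel hchar
    linear_combination (norm := abel) -hz
  subst hze
  have e1 : x * z1 = z1 := by have := mem_eig x m1; rwa [one_smul] at this
  have e0 : x * z0 = 0 := by have := mem_eig x m0; rwa [zero_smul] at this
  have ee : x * (0:M) = 0 := mul_zero x
  have hxz : x * (z1 + z0 + 0) = z1 := by rw [mul_add, mul_add, e1, e0, ee, add_zero, add_zero]
  constructor
  · rw [hxz]; exact m1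
  · have : z1 + z0 + 0 - x * (z1 + z0 + 0) = z0 := by rw [hxz]; abel
    rw [this]; exact m0

lemma mul_one_e (hchar : ringChar F ≠ 2) {Φ : Set F} {η : F} {x : M} (hx : IsJordanAxis Φ η x)
    {τ : M →ₗ[F] M} (hτ : IsMiyamoto η x τ) {y w : M} (my : y ∈ eigSp x (1:F))
    (hw : τ w = -w) : x * (y * w) = η • (y * w) :=
  mem_eig x (hx.mul_1e y my w (odd_mem hchar hx hτ hw))

lemma mulE (hchar : ringChar F ≠ 2) {Φ : Set F} {η : F} {x : M} (hx : IsJordanAxis Φ η x)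
    {τ : M →ₗ[F] M} (hτ : IsMiyamoto η x τ) {z w : M} (hz : τ z = z) (hw : τ w = -w) :
    x * (z * w) = η • (z * w) := by
  obtain ⟨m1, m0⟩ := even_parts hchar hx hτ hz
  have mw := odd_mem hchar hx hτ hw
  have hsplit : z * w = (x * z) * w + (z - x * z) * w := by rw [← add_mul]; congr 1; abel
  rw [hsplit]
  exact mem_eig x (Submodule.add_mem _ (hx.mul_1e _ m1 w mw) (hx.mul_0e _ m0 w mw))

lemma mul11' (hchar : ringChar F ≠ 2) {Φ : Set F} {η : F} {x : M} (hx : IsJordanAxis Φ η x)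
    {τ : M →ₗ[F] M} (hτ : IsMiyamoto η x τ) {z w : M} (hz : τ z = z) (hw : τ w = w) :
    x * ((x * z) * (x * w)) = (x * z) * (x * w) := by
  have := mem_eig x (hx.mul_11 _ (even_parts hchar hx hτ hz).1 _ (even_parts hchar hx hτ hw).1)
  rwa [one_smul] at this

lemma mul00' (hchar : ringChar F ≠ 2) {Φ : Set F} {η : F} {x : M} (hx : IsJordanAxis Φ η x)
    {τ : M →ₗ[F] M} (hτ : IsMiyamoto η x τ) {z w : M} (hz : τ z = z) (hw : τ w = w) :
    x * ((z - x * z) * (w - x * w)) = 0 := by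
  have := mem_eig x (hx.mul_00 _ (even_parts hchar hx hτ hz).2 _ (even_parts hchar hx hτ hw).2)
  rwa [zero_smul] at this

lemma tau_mul {Φ : Set F} (hΦ : Φ ⊆ ({0, 1} : Set F)) {η : F} {x : M} (hx : IsJordanAxis Φ η x)
    {τ : M →ₗ[F] M} (hτ : IsMiyamoto η x τ) (z w : M) : τ (z * w) = τ z * τ w := by
  have hsupΦ : (⨆ t ∈ Φ, eigSp x t) ≤ eigSp x (1:F) ⊔ eigSp x (0:F) := by
    apply iSup₂_le
    intro t ht
    rcases hΦ ht with h | h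
    · rw [h]; exact le_sup_right
    · rw [Set.mem_singleton_iff.mp h]; exact le_sup_left
  have even_fix : ∀ y : M, y ∈ eigSp x (1:F) ⊔ eigSp x (0:F) → τ y = y := hτ.1
  have mem10 : ∀ {y : M}, y ∈ eigSp x (1:F) → y ∈ eigSp x (1:F) ⊔ eigSp x (0:F) :=
    fun h => Submodule.mem_sup_left h
  have mem00 : ∀ {y : M}, y ∈ eigSp x (0:F) → y ∈ eigSp x (1:F) ⊔ eigSp x (0:F) :=
    fun h => Submodule.mem_sup_right h
  obtain ⟨z1, n1, z0, n0, ze, ne, hdz⟩ := hx.total z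
  obtain ⟨w1, m1, w0, m0, we, me, hdw⟩ := hx.total w
  subst hdz; subst hdw
  -- tau values of the nine products
  have t11 : τ (z1 * w1) = z1 * w1 := even_fix _ (mem10 (hx.mul_11 _ n1 _ m1))
  have t00 : τ (z0 * w0) = z0 * w0 := even_fix _ (mem00 (hx.mul_00 _ n0 _ m0))
  have t10 : τ (z1 * w0) = z1 * w0 := by
    have h := hx.mul_01 _ m0 _ n1
    rw [mul_comm] at h
    exact even_fix _ (hsupΦ h)
  have t01 : τ (z0 * w1) = z0 * w1 := even_fix _ (hsupΦ (hx.mul_01 _ n0 _ m1))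
  have tee : τ (ze * we) = ze * we := by
    have h := hx.mul_ee _ ne _ me
    refine even_fix _ ?_
    rw [sup_comm]; exact h
  have t1e : τ (z1 * we) = -(z1 * we) := hτ.2 _ (hx.mul_1e _ n1 _ me)
  have t0e : τ (z0 * we) = -(z0 * we) := hτ.2 _ (hx.mul_0e _ n0 _ me)
  have te1 : τ (ze * w1) = -(ze * w1) := by
    have h := hx.mul_1e _ m1 _ ne
    rw [mul_comm] at h
    exact hτ.2 _ h
  have te0 : τ (ze * w0) = -(ze * w0) := by
    have h := hx.mul_0e _ m0 _ ne
    rw [mul_comm] at h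
    exact hτ.2 _ h
  rw [tau_decomp hτ n1 n0 ne, tau_decomp hτ m1 m0 me]
  simp only [mul_add, add_mul, sub_mul, mul_sub, map_add, map_sub]
  rw [t11, t00, t10, t01, tee, t1e, t0e, te1, te0]
  abel

end Framework

set_option maxHeartbeats 1000000 in
/-- Lemma 4 (1): the value of `p₁p₁` in a 2-generated `F_Φ(η)`-axial algebra. -/
theorem jordan_p1_mul_p1 {F M : Type} [Field F] [NonUnitalNonAssocCommRing M] [Module F M]
    [SMulCommClass F M M] [IsScalarTower F M M]
    (hchar : ringChar F ≠ 2)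
    (Φ : Set F) (hΦ : Φ ⊆ {0, 1}) (η : F) (hη0 : η ≠ 0) (hη1 : η ≠ 1)
    (a₀ a₁ : M) (h₀ : IsJordanAxis Φ η a₀) (h₁ : IsJordanAxis Φ η a₁)
    (hgen : NonUnitalAlgebra.adjoin F {a₀, a₁} = ⊤)
    (τ₀ τ₁ : M →ₗ[F] M) (hτ₀ : IsMiyamoto η a₀ τ₀) (hτ₁ : IsMiyamoto η a₁ τ₁)
    (a : ℤ → M) (ha0 : a 0 = a₀) (ha1 : a 1 = a₁)
    (hτ0a : ∀ k : ℤ, τ₀ (a k) = a (-k)) (hτ1a : ∀ k : ℤ, τ₁ (a k) = a (2 - k))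
    (p : ℤ → ℤ → M)
    (hp : ∀ i j : ℤ, p i j = a j * a (i + j) - η • (a j + a (i + j)))
    :
    p 1 0 * p 1 0 =
      ((2 * η - 1) / 2) • (a₀ * p 2 1) - (η ^ 2 / 2) • p 2 1 - (η ^ 2 - η) • p 2 0 +
        ((8 * η ^ 2 - 12 * η + 3) / 2) • p 1 0 +
        ((η * (2 * η - 1) ^ 2) / 2) • a₀ +
        ((3 * η * (η - 1) * (2 * η - 1)) / 4) • (a 1 + a (-1)) := by
  -- Miyamoto involution values on the axes
  have tb : τ₀ a₁ = a (-1) := by have := hτ0a 1; rwa [ha1] at this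
  have tp : τ₀ (a (-1)) = a₁ := by
    have := hτ0a (-1); rw [show (-(-1) : ℤ) = 1 by norm_num, ha1] at this; exact this
  have ra : τ₁ a₀ = a 2 := by
    have := hτ1a 0; rw [show ((2:ℤ) - 0) = 2 by norm_num, ha0] at this; exact this
  have rp : τ₁ (a (-1)) = a 3 := by
    have := hτ1a (-1); rw [show ((2:ℤ) - (-1)) = 3 by norm_num] at this; exact this
  have rd : τ₁ (a 3) = a (-1) := by
    have := hτ1a 3; rw [show ((2:ℤ) - 3) = -1 by norm_num] at this; exact this
  -- parity facts
  have hU : τ₀ (a₁ - a (-1)) = -(a₁ - a (-1)) := by rw [map_sub, tb, tp, neg_sub]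
  have hS : τ₀ (a₁ + a (-1)) = a₁ + a (-1) := by rw [map_add, tb, tp, add_comm]
  have hPD : τ₁ (a (-1) - a 3) = -(a (-1) - a 3) := by rw [map_sub, rp, rd, neg_sub]
  -- hypothesis equations
  have H4 : a₀ * (a₁ - a (-1)) = η • (a₁ - a (-1)) :=
    mem_eig a₀ (odd_mem hchar h₀ hτ₀ hU)
  have H5 : a₀ * (a₀ * a₁) = a₀ * a₁ + ((η^2 - η)/2) • (a₁ - a (-1)) := by
    have := mulA hchar h₀ hτ₀ a₁; rwa [tb] at this
  have H6 : a₁ * (a₁ * a₀) = a₁ * a₀ + ((η^2 - η)/2) • (a₀ - a 2) := by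
    have := mulA hchar h₁ hτ₁ a₀; rwa [ra] at this
  have E4 : a₁ * (a (-1) - a 3) = η • (a (-1) - a 3) :=
    mem_eig a₁ (odd_mem hchar h₁ hτ₁ hPD)
  have H7 : a₀ * ((a₀ * (a₁ + a (-1))) * (a₀ * (a₁ + a (-1)))) =
      (a₀ * (a₁ + a (-1))) * (a₀ * (a₁ + a (-1))) := mul11' hchar h₀ hτ₀ hS hS
  have H8 : a₀ * (((a₁ + a (-1)) - a₀ * (a₁ + a (-1))) * ((a₁ + a (-1)) - a₀ * (a₁ + a (-1)))) =
      0 := mul00' hchar h₀ hτ₀ hS hS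
  have H10 : a₀ * ((a₁ + a (-1)) * (a₁ - a (-1))) = η • ((a₁ + a (-1)) * (a₁ - a (-1))) :=
    mulE hchar h₀ hτ₀ hS hU
  have H11 : a₀ * ((a₀ * (a₁ + a (-1))) * (a₁ - a (-1))) =
      η • ((a₀ * (a₁ + a (-1))) * (a₁ - a (-1))) :=
    mul_one_e hchar h₀ hτ₀ (even_parts hchar h₀ hτ₀ hS).1 hU
  have hpp : a (-1) * a (-1) = a (-1) := by
    have := tau_mul hΦ h₀ hτ₀ a₁ a₁
    rw [h₁.idem, tb] at this
    exact this.symm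
  -- multiplied hypotheses
  have hbb' : a₀ * (a₁ * a₁) = a₀ * a₁ := by rw [h₁.idem]
  have haH6 : a₀ * (a₁ * (a₁ * a₀)) = a₀ * (a₁ * a₀ + ((η^2 - η)/2) • (a₀ - a 2)) := by
    rw [H6]
  have haE4 : a₀ * (a₁ * (a (-1) - a 3)) = a₀ * (η • (a (-1) - a 3)) := by rw [E4]
  have hbH4 : a₁ * (a₀ * (a₁ - a (-1))) = a₁ * (η • (a₁ - a (-1))) := by rw [H4]
  have hpH4 : a (-1) * (a₀ * (a₁ - a (-1))) = a (-1) * (η • (a₁ - a (-1))) := by rw [H4]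
  have habH4 : (a₀ * a₁) * (a₀ * (a₁ - a (-1))) = (a₀ * a₁) * (η • (a₁ - a (-1))) := by rw [H4]
  have hapH4 : (a₀ * a (-1)) * (a₀ * (a₁ - a (-1))) = (a₀ * a (-1)) * (η • (a₁ - a (-1))) := by
    rw [H4]
  have habH4' : a₀ * (a₁ * (a₀ * (a₁ - a (-1)))) = a₀ * (a₁ * (η • (a₁ - a (-1)))) := by rw [H4]
  -- rewrite the p's
  rw [hp 1 0, hp 2 1, hp 2 0, show ((1:ℤ) + 0) = 1 by norm_num,
    show ((2:ℤ) + 1) = 3 by norm_num, show ((2:ℤ) + 0) = 2 by norm_num, ha0, ha1]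
  rw [← sub_eq_zero]
  have main :
      (2*η^2 - η) • (a₀*a₀ - a₀) + ((5*η^2 + η)/4) • (a₁*a₁ - a₁)
      + ((η^2 - η)/4) • (a (-1) * a (-1) - a (-1))
      + (η/2 - η^2) • (a₀*(a₁ - a (-1)) - η • (a₁ - a (-1)))
      + (2 - 2*η) • (a₀*(a₀*a₁) - (a₀*a₁ + ((η^2 - η)/2) • (a₁ - a (-1))))
      + (-(2*η)) • (a₁*(a₁*a₀) - (a₁*a₀ + ((η^2 - η)/2) • (a₀ - a 2)))
      + (-(η^2/2)) • (a₁*(a (-1) - a 3) - η • (a (-1) - a 3))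
      + (-(1/4) : F) • (a₀*((a₀*(a₁ + a (-1)))*(a₀*(a₁ + a (-1)))) - (a₀*(a₁ + a (-1)))*(a₀*(a₁ + a (-1))))
      + ((1/4) : F) • (a₀*(((a₁ + a (-1)) - a₀*(a₁ + a (-1)))*((a₁ + a (-1)) - a₀*(a₁ + a (-1)))))
      + ((1/4) : F) • (a₀*((a₁ + a (-1))*(a₁ - a (-1))) - η • ((a₁ + a (-1))*(a₁ - a (-1))))
      + (-(1/2) : F) • (a₀*((a₀*(a₁ + a (-1)))*(a₁ - a (-1))) - η • ((a₀*(a₁ + a (-1)))*(a₁ - a (-1))))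
      + (-η - 1/2) • (a₀*(a₁*a₁) - a₀*a₁)
      + (2 : F) • (a₀*(a₁*(a₁*a₀)) - a₀*(a₁*a₀ + ((η^2 - η)/2) • (a₀ - a 2)))
      + (η - 1/2) • (a₀*(a₁*(a (-1) - a 3)) - a₀*(η • (a (-1) - a 3)))
      + (η/4) • (a₁*(a₀*(a₁ - a (-1))) - a₁*(η • (a₁ - a (-1))))
      + (-(η/4)) • (a (-1)*(a₀*(a₁ - a (-1))) - a (-1)*(η • (a₁ - a (-1))))
      + ((3/4) : F) • ((a₀*a₁)*(a₀*(a₁ - a (-1))) - (a₀*a₁)*(η • (a₁ - a (-1))))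
      + ((1/4) : F) • ((a₀*a (-1))*(a₀*(a₁ - a (-1))) - (a₀*a (-1))*(η • (a₁ - a (-1))))
      + (-1 : F) • (a₀*(a₁*(a₀*(a₁ - a (-1)))) - a₀*(a₁*(η • (a₁ - a (-1)))))
      = (0 : M) := by
    rw [sub_eq_zero_of_eq h₀.idem, sub_eq_zero_of_eq h₁.idem, sub_eq_zero_of_eq hpp,
      sub_eq_zero_of_eq H4, sub_eq_zero_of_eq H5, sub_eq_zero_of_eq H6, sub_eq_zero_of_eq E4,
      sub_eq_zero_of_eq H7, H8, sub_eq_zero_of_eq H10, sub_eq_zero_of_eq H11,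
      sub_eq_zero_of_eq hbb', sub_eq_zero_of_eq haH6, sub_eq_zero_of_eq haE4,
      sub_eq_zero_of_eq hbH4, sub_eq_zero_of_eq hpH4, sub_eq_zero_of_eq habH4,
      sub_eq_zero_of_eq hapH4, sub_eq_zero_of_eq habH4']
    simp
  rw [← main]
  simp only [mul_add, add_mul, mul_sub, sub_mul, smul_add, smul_sub, smul_smul,
    mul_smul_comm, smul_mul_assoc, sub_zero, smul_zero, mul_zero, zero_mul]
  simp only [mul_comm]
  have h2 : (2:F) ≠ 0 := Ring.two_ne_zero hchar
  have h4 : (4:F) ≠ 0 := by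
    intro h
    apply h2
    have : (4:F) = 2 * 2 := by norm_num
    rw [this] at h
    rcases mul_eq_zero.mp h with h' | h' <;> exact h'
  set_option maxHeartbeats 3000000 in
  match_scalars <;> (first | ring1 | (field_simp; try ring1))
end

section
/- Let (M, {a₀, a₁}) be a 2-generated F_Φ(η)-axial algebra with Φ ⊆ {1}. Then a₀p_{2,1} = p_{2,1} + (η−1)·p_{2,0} − (2η−1)·p₁ − η²·a₀ − ((η−1)(2η−1)/2)·(a₁ + a_{−1}) + ((η−1)²/2)·(a₂ + a_{−2}). -/
section JordanHelpers

variable {F M : Type} [Field F] [NonUnitalNonAssocCommRing M] [Module F M]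
    [SMulCommClass F M M] [IsScalarTower F M M]

lemma eig_of_phi {Φ : Set F} (hΦ1 : Φ ⊆ {1}) {a x : M}
    (hx : x ∈ ⨆ t ∈ Φ, eigSp a t) : x ∈ eigSp a (1 : F) := by
  refine (iSup₂_le (fun t ht => ?_) : (⨆ t ∈ Φ, eigSp a t) ≤ eigSp a (1 : F)) hx
  have h := hΦ1 ht
  simp only [Set.mem_singleton_iff] at h
  rw [h]

lemma axis_mul_tau {Φ : Set F} {η : F} {a : M} (h : IsJordanAxis Φ η a)
    {τ : M →ₗ[F] M} (hτ : IsMiyamoto η a τ) (x : M) :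
    a * τ x = a * x - η • (x - τ x) := by
  obtain ⟨z1, hz1, z0, hz0, ze, hze, hx⟩ := h.total x
  have h1 : a * z1 = z1 := by rw [mem_eigSp.mp hz1, one_smul]
  have h0 : a * z0 = 0 := by rw [mem_eigSp.mp hz0, zero_smul]
  have he : a * ze = η • ze := mem_eigSp.mp hze
  have htx : τ x = z1 + z0 - ze := by
    rw [hx, map_add, map_add, miy_fix1 hτ hz1, miy_fix0 hτ hz0, miy_neg hτ hze]
    abel
  rw [htx, hx]
  simp only [mul_add, mul_sub]
  rw [h1, h0, he]
  module

end JordanHelpers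

set_option maxHeartbeats 2000000 in
/-- Lemma 4 (2): the value of `a₀ · p_{2,1}` when `Φ ⊆ {1}`. -/
theorem jordan_a0_mul_p21_of_subset_one {F M : Type} [Field F] [NonUnitalNonAssocCommRing M]
    [Module F M] [SMulCommClass F M M] [IsScalarTower F M M]
    (hchar : ringChar F ≠ 2)
    (Φ : Set F) (hΦ : Φ ⊆ {0, 1}) (η : F) (hη0 : η ≠ 0) (hη1 : η ≠ 1)
    (a₀ a₁ : M) (h₀ : IsJordanAxis Φ η a₀) (h₁ : IsJordanAxis Φ η a₁)
    (hgen : NonUnitalAlgebra.adjoin F {a₀, a₁} = ⊤)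
    (τ₀ τ₁ : M →ₗ[F] M) (hτ₀ : IsMiyamoto η a₀ τ₀) (hτ₁ : IsMiyamoto η a₁ τ₁)
    (a : ℤ → M) (ha0 : a 0 = a₀) (ha1 : a 1 = a₁)
    (hτ0a : ∀ k : ℤ, τ₀ (a k) = a (-k)) (hτ1a : ∀ k : ℤ, τ₁ (a k) = a (2 - k))
    (p : ℤ → ℤ → M)
    (hp : ∀ i j : ℤ, p i j = a j * a (i + j) - η • (a j + a (i + j)))
    (hΦ1 : Φ ⊆ {1}) :
    a₀ * p 2 1 =
      p 2 1 + (η - 1) • p 2 0 - (2 * η - 1) • p 1 0 - η ^ 2 • a₀ -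
        (((η - 1) * (2 * η - 1)) / 2) • (a 1 + a (-1)) +
        ((η - 1) ^ 2 / 2) • (a 2 + a (-2)) := by
  -- scalar nonvanishing facts
  have h2 : (2 : F) ≠ 0 := Ring.two_ne_zero hchar
  have hη1' : η - 1 ≠ 0 := sub_ne_zero.mpr hη1
  have hne : η * η - η ≠ 0 := by
    have h : η * η - η = η * (η - 1) := by ring
    rw [h]; exact mul_ne_zero hη0 hη1'
  -- decomposition of a₁ with respect to a₀
  obtain ⟨x1, hx1, x0, hx0, xe, hxe, hd⟩ := h₀.total a₁
  have ex1 : a₀ * x1 = x1 := by rw [mem_eigSp.mp hx1, one_smul]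
  have ex0 : a₀ * x0 = 0 := by rw [mem_eigSp.mp hx0, zero_smul]
  have exe : a₀ * xe = η • xe := mem_eigSp.mp hxe
  -- memberships of products
  have M11 : x1 * x1 ∈ eigSp a₀ (1 : F) := h₀.mul_11 x1 hx1 x1 hx1
  have M10 : x1 * x0 ∈ eigSp a₀ (1 : F) := by
    rw [mul_comm]; exact eig_of_phi hΦ1 (h₀.mul_01 x0 hx0 x1 hx1)
  have M00 : x0 * x0 ∈ eigSp a₀ (0 : F) := h₀.mul_00 x0 hx0 x0 hx0
  have M1e : x1 * xe ∈ eigSp a₀ η := h₀.mul_1e x1 hx1 xe hxe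
  have M0e : x0 * xe ∈ eigSp a₀ η := h₀.mul_0e x0 hx0 xe hxe
  have e11 : a₀ * (x1 * x1) = x1 * x1 := by rw [mem_eigSp.mp M11, one_smul]
  have e10 : a₀ * (x1 * x0) = x1 * x0 := by rw [mem_eigSp.mp M10, one_smul]
  have e00 : a₀ * (x0 * x0) = 0 := by rw [mem_eigSp.mp M00, zero_smul]
  have e1e : a₀ * (x1 * xe) = η • (x1 * xe) := mem_eigSp.mp M1e
  have e0e : a₀ * (x0 * xe) = η • (x0 * xe) := mem_eigSp.mp M0e
  -- decomposition of xe * xe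
  obtain ⟨w0, hw0m, w1, hw1m, hw⟩ := Submodule.mem_sup.mp (h₀.mul_ee xe hxe xe hxe)
  have ew0 : a₀ * w0 = 0 := by rw [mem_eigSp.mp hw0m, zero_smul]
  have ew1 : a₀ * w1 = w1 := by rw [mem_eigSp.mp hw1m, one_smul]
  -- consequences of a₁ being idempotent
  have hidem : x1*x1 + x1*x0 + x1*xe + (x1*x0 + x0*x0 + x0*xe)
      + (x1*xe + x0*xe + (w0 + w1)) = x1 + x0 + xe := by
    have h := h₁.idem
    rw [hd] at h
    calc x1*x1 + x1*x0 + x1*xe + (x1*x0 + x0*x0 + x0*xe) + (x1*xe + x0*xe + (w0 + w1))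
        = (x1 + x0 + xe) * (x1 + x0 + xe) := by
          rw [hw]
          simp only [mul_add, add_mul]
          rw [mul_comm x0 x1, mul_comm xe x1, mul_comm xe x0]
      _ = x1 + x0 + xe := h
  have hP1 : x1*x1 + x1*x0 + x1*x0 + w1 - x1 ∈ eigSp a₀ (1 : F) :=
    sub_mem (add_mem (add_mem (add_mem M11 M10) M10) hw1m) hx1
  have hP0 : x0*x0 + w0 - x0 ∈ eigSp a₀ (0 : F) := sub_mem (add_mem M00 hw0m) hx0
  have hPe : x1*xe + x1*xe + (x0*xe + x0*xe) - xe ∈ eigSp a₀ η :=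
    sub_mem (add_mem (add_mem M1e M1e) (add_mem M0e M0e)) hxe
  have hsum : (x1*x1 + x1*x0 + x1*x0 + w1 - x1) + (x0*x0 + w0 - x0)
      + (x1*xe + x1*xe + (x0*xe + x0*xe) - xe) = 0 := by
    calc (x1*x1 + x1*x0 + x1*x0 + w1 - x1) + (x0*x0 + w0 - x0)
          + (x1*xe + x1*xe + (x0*xe + x0*xe) - xe)
        = (x1*x1 + x1*x0 + x1*xe + (x1*x0 + x0*x0 + x0*xe)
          + (x1*xe + x0*xe + (w0 + w1))) - (x1 + x0 + xe) := by abel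
      _ = 0 := by rw [hidem, sub_self]
  obtain ⟨E1eq, E0eq, -⟩ := h₀.indep _ hP1 _ hP0 _ hPe hsum
  have hw1v : w1 = x1 - x1*x1 - x1*x0 - x1*x0 := by
    calc w1 = (x1*x1 + x1*x0 + x1*x0 + w1 - x1) - (x1*x1 + x1*x0 + x1*x0 - x1) := by abel
      _ = x1 - x1*x1 - x1*x0 - x1*x0 := by rw [E1eq]; abel
  have hw0v : w0 = x0 - x0*x0 := by
    calc w0 = (x0*x0 + w0 - x0) - (x0*x0 - x0) := by abel
      _ = x0 - x0*x0 := by rw [E0eq]; abel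
  -- a (-1)
  have A1 : a 1 = x1 + x0 + xe := by rw [ha1, hd]
  have Am1 : a (-1) = x1 + x0 - xe := by
    have h := hτ0a 1
    rw [ha1, hd] at h
    rw [← h, map_add, map_add, miy_fix1 hτ₀ hx1, miy_fix0 hτ₀ hx0, miy_neg hτ₀ hxe]
    abel
  -- p 2 1 in terms of a 1 and a (-1)
  have hp21 : p 2 1 = a 1 * a (-1) - η • (a 1 + a (-1)) := by
    have h := hp 2 1
    norm_num at h
    have h3 : τ₁ (a (-1)) = a 3 := by
      have h' := hτ1a (-1); norm_num at h'; exact h'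
    have key := axis_mul_tau h₁ hτ₁ (a (-1))
    rw [h3] at key
    rw [← ha1] at key
    rw [h, key]
    module
  -- products
  have Hprod : a 1 * a (-1) = x1*x1 + x1*x0 + x1*x0 + x0*x0 - (w0 + w1) := by
    rw [A1, Am1, hw]
    simp only [mul_add, add_mul, mul_sub, sub_mul]
    rw [mul_comm x0 x1, mul_comm xe x1, mul_comm xe x0]
    abel
  have Hmulprod : a₀ * (a 1 * a (-1)) = x1*x1 + x1*x0 + x1*x0 - w1 := by
    rw [Hprod]
    simp only [mul_add, mul_sub]
    rw [e11, e10, e00, ew0, ew1]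
    module
  have Ha1m : a₀ * a 1 = x1 + η • xe := by
    rw [A1]; simp only [mul_add]; rw [ex1, ex0, exe]; module
  have Ham1 : a₀ * a (-1) = x1 - η • xe := by
    rw [Am1]; simp only [mul_add, mul_sub]; rw [ex1, ex0, exe]; module
  have HL : a₀ * p 2 1
      = x1*x1 + x1*x0 + x1*x0 - w1 - η • ((x1 + η • xe) + (x1 - η • xe)) := by
    rw [hp21, mul_sub, mul_smul_comm, mul_add, Ha1m, Ham1, Hmulprod]
  -- decomposition of a₀ with respect to a₁
  obtain ⟨y1, hy1, y0, hy0, ye, hye, hd0⟩ := h₁.total a₀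
  have ey1 : a₁ * y1 = y1 := by rw [mem_eigSp.mp hy1, one_smul]
  have ey0 : a₁ * y0 = 0 := by rw [mem_eigSp.mp hy0, zero_smul]
  have eye : a₁ * ye = η • ye := mem_eigSp.mp hye
  have Hba : a₁ * a₀ = y1 + η • ye := by
    rw [hd0]
    simp only [mul_add]
    rw [ey1, ey0, eye]
    module
  have Hba' : a₁ * a₀ = x1 + η • xe := by
    rw [mul_comm, hd]
    simp only [mul_add]
    rw [ex1, ex0, exe]
    module
  have Hbb : a₁ * (a₁ * a₀)
      = x1*x1 + x1*x0 + x1*xe + η • (x1*xe + x0*xe + (w0 + w1)) := by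
    rw [Hba', mul_add, mul_smul_comm, hd]
    simp only [add_mul]
    rw [mul_comm x0 x1, mul_comm xe x1, ← hw]
  have Hbb' : a₁ * (a₁ * a₀) = y1 + (η * η) • ye := by
    rw [Hba, mul_add, mul_smul_comm, ey1, eye, smul_smul]
  have Hye : (η * η - η) • ye
      = x1*x1 + x1*x0 + x1*xe + η • (x1*xe + x0*xe + (w0 + w1)) - (x1 + η • xe) := by
    calc (η * η - η) • ye = (y1 + (η * η) • ye) - (y1 + η • ye) := by module
      _ = a₁ * (a₁ * a₀) - a₁ * a₀ := by rw [Hbb', Hba]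
      _ = _ := by rw [Hbb, Hba']
  have hyeval : ye = (η * η - η)⁻¹
      • (x1*x1 + x1*x0 + x1*xe + η • (x1*xe + x0*xe + (w0 + w1)) - (x1 + η • xe)) := by
    rw [← Hye, smul_smul, inv_mul_cancel₀ hne, one_smul]
  -- a 2 and a (-2)
  have A2 : a 2 = a₀ - ye - ye := by
    have h := hτ1a 0
    norm_num at h
    rw [ha0, hd0] at h
    rw [hd0, ← h, map_add, map_add, miy_fix1 hτ₁ hy1, miy_fix0 hτ₁ hy0, miy_neg hτ₁ hye]
    abel
  have Hτ0ye : τ₀ ye = (η * η - η)⁻¹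
      • (x1*x1 + x1*x0 - x1*xe + η • (-(x1*xe) - x0*xe + (w0 + w1)) - (x1 - η • xe)) := by
    rw [hyeval, map_smul]
    congr 1
    simp only [map_sub, map_add, map_smul]
    rw [miy_fix1 hτ₀ M11, miy_fix1 hτ₀ M10, miy_neg hτ₀ M1e, miy_neg hτ₀ M0e,
      miy_fix1 hτ₀ hx1, miy_neg hτ₀ hxe, miy_fix0 hτ₀ hw0m, miy_fix1 hτ₀ hw1m]
    module
  have Am2 : a (-2) = a₀ - τ₀ ye - τ₀ ye := by
    have h := hτ0a 2
    norm_num at h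
    have h0 : τ₀ a₀ = a₀ := by
      have h' := hτ0a 0; norm_num at h'; rw [ha0] at h'; exact h'
    rw [← h, A2, map_sub, map_sub, h0]
  have Ha0ye : a₀ * ye = (η * η - η)⁻¹
      • (x1*x1 + x1*x0 + η • (x1*xe) + η • (η • (x1*xe) + η • (x0*xe) + w1)
        - (x1 + η • (η • xe))) := by
    rw [hyeval, mul_smul_comm]
    congr 1
    simp only [mul_sub, mul_add, mul_smul_comm]
    rw [e11, e10, e1e, e0e, ex1, exe, ew0, ew1]
    module
  have hp20 : p 2 0 = (a₀ - a₀ * ye - a₀ * ye) - η • (a₀ + (a₀ - ye - ye)) := by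
    have h := hp 2 0
    norm_num at h
    rw [h, ha0, A2, mul_sub, mul_sub, h₀.idem]
    module
  have hp10 : p 1 0 = (x1 + η • xe) - η • (a₀ + (x1 + x0 + xe)) := by
    have h := hp 1 0
    norm_num at h
    rw [h, ha0, A1]
    simp only [mul_add]
    rw [ex1, ex0, exe]
    module
  -- conclusion
  rw [HL, hp21, Hprod, hp20, hp10, A2, Am2, A1, Am1, Ha0ye, Hτ0ye, hyeval, hw1v, hw0v]
  match_scalars <;> field_simp <;> ring
end

section
/- Let (M, {a₀, a₁}) be a 2-generated F_Φ(η)-axial algebra with Φ ⊆ {0}. Then a₀p_{2,1} = η·p_{2,0} − (2η−1)·p₁ − η²·a₀ − (η(2η−1)/2)·(a₁ + a_{−1}) + (η²/2)·(a₂ + a_{−2}). -/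
/-- Lemma 4 (3): the value of `a₀ · p_{2,1}` when `Φ ⊆ {0}`. -/
theorem jordan_a0_mul_p21_of_subset_zero {F M : Type} [Field F] [NonUnitalNonAssocCommRing M]
    [Module F M] [SMulCommClass F M M] [IsScalarTower F M M]
    (hchar : ringChar F ≠ 2)
    (Φ : Set F) (hΦ : Φ ⊆ {0, 1}) (η : F) (hη0 : η ≠ 0) (hη1 : η ≠ 1)
    (a₀ a₁ : M) (h₀ : IsJordanAxis Φ η a₀) (h₁ : IsJordanAxis Φ η a₁)
    (hgen : NonUnitalAlgebra.adjoin F {a₀, a₁} = ⊤)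
    (τ₀ τ₁ : M →ₗ[F] M) (hτ₀ : IsMiyamoto η a₀ τ₀) (hτ₁ : IsMiyamoto η a₁ τ₁)
    (a : ℤ → M) (ha0 : a 0 = a₀) (ha1 : a 1 = a₁)
    (hτ0a : ∀ k : ℤ, τ₀ (a k) = a (-k)) (hτ1a : ∀ k : ℤ, τ₁ (a k) = a (2 - k))
    (p : ℤ → ℤ → M)
    (hp : ∀ i j : ℤ, p i j = a j * a (i + j) - η • (a j + a (i + j)))
    (hΦ0 : Φ ⊆ {0}) :
    a₀ * p 2 1 =
      η • p 2 0 - (2 * η - 1) • p 1 0 - η ^ 2 • a₀ -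
        ((η * (2 * η - 1)) / 2) • (a 1 + a (-1)) + (η ^ 2 / 2) • (a 2 + a (-2)) := by
  subst ha0 ha1
  have h2 : (2:F) ≠ 0 := Ring.two_ne_zero hchar
  have hη1' : η - 1 ≠ 0 := sub_ne_zero.mpr hη1
  have hD : η^2 - η ≠ 0 := by
    have hfact : η^2 - η = η * (η - 1) := by ring
    rw [hfact]; exact mul_ne_zero hη0 hη1'
  have hsup0 : (⨆ t ∈ Φ, eigSp (a 0) t) ≤ eigSp (a 0) (0:F) := by
    refine iSup₂_le fun t ht => ?_
    have ht0 : t = 0 := hΦ0 ht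
    subst ht0; exact le_rfl
  -- decomposition of `a 1` w.r.t. `a 0`
  obtain ⟨y, hy, z, hz, e, he, hdec⟩ := h₀.total (a 1)
  obtain ⟨g, hg, f, hf, hgf⟩ := Submodule.mem_sup.mp (h₀.mul_ee e he e he)
  have hzy0 : z * y ∈ eigSp (a 0) (0:F) := hsup0 (h₀.mul_01 z hz y hy)
  have hyz0 : y * z ∈ eigSp (a 0) (0:F) := by rw [mul_comm]; exact hzy0
  have hyeη : y * e ∈ eigSp (a 0) η := h₀.mul_1e y hy e he
  have heyη : e * y ∈ eigSp (a 0) η := by rw [mul_comm]; exact hyeη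
  have hzeη : z * e ∈ eigSp (a 0) η := h₀.mul_0e z hz e he
  have hezη : e * z ∈ eigSp (a 0) η := by rw [mul_comm]; exact hzeη
  -- eigen-equations
  have hy1 : a 0 * y = y := by have h : a 0 * y = (1:F) • y := hy; rwa [one_smul] at h
  have hz0 : a 0 * z = 0 := by have h : a 0 * z = (0:F) • z := hz; rwa [zero_smul] at h
  have heE : a 0 * e = η • e := he
  have hf1 : a 0 * f = f := by have h : a 0 * f = (1:F) • f := hf; rwa [one_smul] at h
  have hg0 : a 0 * g = 0 := by have h : a 0 * g = (0:F) • g := hg; rwa [zero_smul] at h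
  have hzyE : a 0 * (z * y) = 0 := by
    have h : a 0 * (z*y) = (0:F) • (z*y) := hzy0; rwa [zero_smul] at h
  have hyeE : a 0 * (y * e) = η • (y * e) := hyeη
  have h00 : a 0 * a 0 = a 0 := h₀.idem
  -- relations from idempotency of `a 1`
  have h1 : (y+z+e) * (y+z+e) = y+z+e := by rw [← hdec]; exact h₁.idem
  have hzero : (y*y + f - y) + (z*z + y*z + z*y + g - z) + (y*e + e*y + z*e + e*z - e) = 0 := by
    calc (y*y + f - y) + (z*z + y*z + z*y + g - z) + (y*e + e*y + z*e + e*z - e)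
        = ((y+z+e)*(y+z+e) - (y+z+e)) + ((g+f) - e*e) := by
          simp only [mul_add, add_mul]; abel
      _ = 0 := by rw [h1, hgf]; abel
  obtain ⟨R1, R2, R3⟩ := h₀.indep _ (sub_mem (add_mem (h₀.mul_11 y hy y hy) hf) hy)
      _ (sub_mem (add_mem (add_mem (add_mem (h₀.mul_00 z hz z hz) hyz0) hzy0) hg) hz)
      _ (sub_mem (add_mem (add_mem (add_mem hyeη heyη) hzeη) hezη) he) hzero
  have hyy : y*y = y - f := by
    rwa [show y*y + f - y = y*y - (y - f) from by abel, sub_eq_zero] at R1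
  have hyzzy : y*z = z*y := mul_comm y z
  have hzz : z*z = z - z*y - z*y - g := by
    rw [hyzzy] at R2
    rwa [show z*z + z*y + z*y + g - z = z*z - (z - z*y - z*y - g) from by abel,
      sub_eq_zero] at R2
  have hey : e*y = y*e := mul_comm e y
  have hez : e*z = z*e := mul_comm e z
  have hR3 : z*e + z*e = e - (y*e + y*e) := by
    rw [hey, hez] at R3
    rwa [show y*e + y*e + z*e + z*e - e = (z*e + z*e) - (e - (y*e + y*e)) from by abel,
      sub_eq_zero] at R3
  have hze : z*e = (2:F)⁻¹ • e - y*e := by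
    have h5 : z*e = (2:F)⁻¹ • (z*e + z*e) := by
      rw [← two_smul F, smul_smul, inv_mul_cancel₀ h2, one_smul]
    rw [hR3, smul_sub] at h5
    have h6 : (2:F)⁻¹ • (y*e + y*e) = y*e := by
      rw [← two_smul F, smul_smul, inv_mul_cancel₀ h2, one_smul]
    rw [h6] at h5; exact h5
  have hee : e*e = g + f := hgf.symm
  -- a (-1)
  have ham1 : a (-1) = y + z - e := by
    have h7 := hτ0a 1
    have hτyz : τ₀ (y + z) = y + z :=
      hτ₀.1 _ (add_mem (Submodule.mem_sup_left hy) (Submodule.mem_sup_right hz))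
    have hτe : τ₀ e = -e := hτ₀.2 e he
    rw [hdec, map_add, hτyz, hτe] at h7
    rw [← h7]; abel
  have ha01 : a 0 * a 1 = y + η • e := by
    rw [hdec]; simp only [mul_add, hy1, hz0, heE]; abel
  have hP : a 1 * a (-1) = y + z - (2:F)•f - (2:F)•g := by
    rw [hdec, ham1]
    simp only [mul_add, add_mul, mul_sub, sub_mul]
    simp only [hyy, hyzzy, hzz, hey, hez, hze, hee]
    match_scalars <;> (try field_simp) <;> ring
  -- decomposition of `a 0` w.r.t. `a 1`, and `a 2`
  obtain ⟨y', hy', z', hz', e'', he'', hdec'⟩ := h₁.total (a 0)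
  have hy'1 : a 1 * y' = y' := by have h : a 1 * y' = (1:F) • y' := hy'; rwa [one_smul] at h
  have hz'0 : a 1 * z' = 0 := by have h : a 1 * z' = (0:F) • z' := hz'; rwa [zero_smul] at h
  have he''E : a 1 * e'' = η • e'' := he''
  have ha2 : a 2 = a 0 - (2:F) • e'' := by
    have h8 := hτ1a 0
    norm_num at h8
    have hτ'yz : τ₁ (y' + z') = y' + z' :=
      hτ₁.1 _ (add_mem (Submodule.mem_sup_left hy') (Submodule.mem_sup_right hz'))
    have hτ'e : τ₁ e'' = -e'' := hτ₁.2 e'' he''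
    rw [hdec', map_add, hτ'yz, hτ'e] at h8
    rw [← h8, hdec']; module
  have ha01' : a 0 * a 1 = y' + η • e'' := by
    rw [mul_comm, hdec']; simp only [mul_add, hy'1, hz'0, he''E]; abel
  have hE : (η^2 - η) • e'' = (η-1)•f + z*y + y*e + η•g - (η/2)•e := by
    have hEdef : (η^2 - η) • e'' = a 1 * (a 0 * a 1) - a 0 * a 1 := by
      rw [ha01']; simp only [mul_add, mul_smul_comm, hy'1, he''E]; module
    rw [hEdef, ha01, hdec]
    simp only [mul_add, add_mul, smul_add, mul_smul_comm, smul_mul_assoc]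
    simp only [hyy, hyzzy, hzz, hey, hez, hze, hee]
    match_scalars <;> (try field_simp) <;> ring
  have he''val : e'' = (η^2-η)⁻¹ • ((η-1)•f + z*y + y*e + η•g - (η/2)•e) := by
    rw [← hE, smul_smul, inv_mul_cancel₀ hD, one_smul]
  have hτf : τ₀ f = f := hτ₀.1 f (Submodule.mem_sup_left hf)
  have hτg : τ₀ g = g := hτ₀.1 g (Submodule.mem_sup_right hg)
  have hτzy : τ₀ (z*y) = z*y := hτ₀.1 _ (Submodule.mem_sup_right hzy0)
  have hτye : τ₀ (y*e) = -(y*e) := hτ₀.2 _ hyeη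
  have hτe' : τ₀ e = -e := hτ₀.2 e he
  have hτe'' : τ₀ e'' = (η^2-η)⁻¹ • ((η-1)•f + z*y - y*e + η•g + (η/2)•e) := by
    rw [he''val]
    simp only [map_smul, map_sub, map_add, hτf, hτg, hτzy, hτye, hτe']
    module
  have hτa0 : τ₀ (a 0) = a 0 := by have h9 := hτ0a 0; norm_num at h9; exact h9
  have ham2 : a (-2) = a 0 - (2:F) • ((η^2-η)⁻¹ • ((η-1)•f + z*y - y*e + η•g + (η/2)•e)) := by
    have h10 := hτ0a 2
    rw [ha2, map_sub, map_smul, hτa0, hτe''] at h10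
    exact h10.symm
  have ha2' : a 2 = a 0 - (2:F) • ((η^2-η)⁻¹ • ((η-1)•f + z*y + y*e + η•g - (η/2)•e)) := by
    rw [ha2, he''val]
  -- `a 3` and `p 2 1`
  obtain ⟨u1, hu1, u0, hu0, o, ho, hdm1⟩ := h₁.total (a (-1))
  have hu1E : a 1 * u1 = u1 := by have h : a 1 * u1 = (1:F) • u1 := hu1; rwa [one_smul] at h
  have hu0E : a 1 * u0 = 0 := by have h : a 1 * u0 = (0:F) • u0 := hu0; rwa [zero_smul] at h
  have hoE : a 1 * o = η • o := ho
  have ha3 : a 3 = u1 + u0 - o := by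
    have h11 := hτ1a (-1)
    norm_num at h11
    have hτu : τ₁ (u1 + u0) = u1 + u0 :=
      hτ₁.1 _ (add_mem (Submodule.mem_sup_left hu1) (Submodule.mem_sup_right hu0))
    have hτo : τ₁ o = -o := hτ₁.2 o ho
    rw [hdm1, map_add, hτu, hτo] at h11
    rw [← h11]; abel
  have hp21 : p 2 1 = a 1 * a (-1) - η • (a 1 + a (-1)) := by
    have h12 := hp 2 1
    norm_num at h12
    rw [h12, ha3, hdm1]
    simp only [mul_add, mul_sub, hu1E, hu0E, hoE]
    module
  have hp20 := hp 2 0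
  have hp10 := hp 1 0
  norm_num at hp20 hp10
  rw [hp21, hp20, hp10, hP, ha01, ha2', ham2, hdec, ham1]
  simp only [mul_add, mul_sub, mul_smul_comm, h00, hy1, hz0, heE, hf1, hg0, hzyE, hyeE,
    smul_add, smul_sub, smul_neg, smul_smul, add_zero, zero_add, sub_zero, smul_zero, mul_zero]
  match_scalars <;> (try field_simp) <;> ring
end
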